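/- arXiv:math/0601744 — 10 statements merged into one kernel-verified Lean document; each statement's English description precedes it below -/
import Mathlib

section
/- Let (X,ℰ) be a coarse space and n ∈ ℕ. The following are equivalent: (i) asdim(X,ℰ) ≤ n; (ii) for every entourage L ∈ ℰ there is a uniformly bounded cover 𝒰 = 𝒰₁ ∪ … ∪ 𝒰_{n+1} of X such that each family 𝒰ᵢ is L-disjoint, i.e. (A × B) ∩ L = ∅ whenever A, B ∈ 𝒰ᵢ are distinct; (iii) for every entourage L ∈ ℰ there is a uniformly bounded cover 𝒰 = 𝒰₁ ∪ … ∪ 𝒰_{n+1} of X with appetite L such that each family 𝒰ᵢ consists of pairwise disjoint sets. -/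
/-- A coarse structure on a set `X`. -/
structure CoarseStruct (X : Type*) where
  IsEntourage : Set (X × X) → Prop
  subset_mem : ∀ ⦃E F : Set (X × X)⦄, IsEntourage F → E ⊆ F → IsEntourage E
  union_mem : ∀ ⦃E F : Set (X × X)⦄, IsEntourage E → IsEntourage F → IsEntourage (E ∪ F)
  diagonal_mem : IsEntourage {p | p.1 = p.2}
  inv_mem : ∀ ⦃E : Set (X × X)⦄, IsEntourage E → IsEntourage {p | (p.2, p.1) ∈ E}
  comp_mem : ∀ ⦃E F : Set (X × X)⦄, IsEntourage E → IsEntourage F →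
      IsEntourage {p | ∃ y, (p.1, y) ∈ E ∧ (y, p.2) ∈ F}

namespace CoarseStruct

variable {X Y : Type*}

/-- `f` is coarsely uniform if images of entourages are entourages. -/
def CoarselyUniform (ℰ : CoarseStruct X) (ℱ : CoarseStruct Y) (f : X → Y) : Prop :=
  ∀ ⦃E⦄, ℰ.IsEntourage E → ℱ.IsEntourage (Prod.map f f '' E)

/-- `f` is a coarse embedding if it is coarsely uniform and preimages of entourages
are entourages. -/
def CoarseEmbedding (ℰ : CoarseStruct X) (ℱ : CoarseStruct Y) (f : X → Y) : Prop :=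
  CoarselyUniform ℰ ℱ f ∧ ∀ ⦃F⦄, ℱ.IsEntourage F → ℰ.IsEntourage (Prod.map f f ⁻¹' F)

/-- Two maps into `X` are close if `{(f s, g s) : s ∈ S}` is an entourage. -/
def Close (ℰ : CoarseStruct X) {S : Type*} (f g : S → X) : Prop :=
  ℰ.IsEntourage (Set.range fun s => (f s, g s))

/-- A set is bounded if it is contained in `E(x)` for some entourage `E` and point `x`. -/
def IsBounded (ℰ : CoarseStruct X) (B : Set X) : Prop :=
  ∃ E x, ℰ.IsEntourage E ∧ B ⊆ {y | (y, x) ∈ E}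

/-- `f` is coarsely proper if preimages of bounded sets are bounded. -/
def CoarselyProper (ℰ : CoarseStruct X) (ℱ : CoarseStruct Y) (f : X → Y) : Prop :=
  ∀ ⦃B⦄, IsBounded ℱ B → IsBounded ℰ (f ⁻¹' B)

/-- A coarse map is coarsely uniform and coarsely proper. -/
def CoarseMap (ℰ : CoarseStruct X) (ℱ : CoarseStruct Y) (f : X → Y) : Prop :=
  CoarselyUniform ℰ ℱ f ∧ CoarselyProper ℰ ℱ f

/-- A coarse equivalence is a coarse map with a coarse inverse up to closeness. -/
def CoarseEquivalence (ℰ : CoarseStruct X) (ℱ : CoarseStruct Y) (f : X → Y) : Prop :=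
  CoarseMap ℰ ℱ f ∧ ∃ g : Y → X, CoarseMap ℱ ℰ g ∧
    Close ℰ (g ∘ f) id ∧ Close ℱ (f ∘ g) id

/-- `E(x) = {y : (y,x) ∈ E}`. -/
def ball (E : Set (X × X)) (x : X) : Set X := {y | (y, x) ∈ E}

/-- `𝒰` is a cover of `X`. -/
def IsCover (𝒰 : Set (Set X)) : Prop := ∀ x : X, ∃ U ∈ 𝒰, x ∈ U

/-- `𝒰` is uniformly bounded if `⋃_{U ∈ 𝒰} U × U` is an entourage. -/
def UniformlyBounded (ℰ : CoarseStruct X) (𝒰 : Set (Set X)) : Prop :=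
  ℰ.IsEntourage (⋃ U ∈ 𝒰, U ×ˢ U)

/-- `𝒰` has appetite `L` if every `L(x)` is contained in some member of `𝒰`. -/
def HasAppetite (𝒰 : Set (Set X)) (L : Set (X × X)) : Prop :=
  ∀ x : X, ∃ U ∈ 𝒰, ball L x ⊆ U

/-- The multiplicity of `𝒰` is at most `m`: at most `m` members of `𝒰` share a point. -/
def MultiplicityLE (𝒰 : Set (Set X)) (m : ℕ) : Prop :=
  ∀ x : X, {U | U ∈ 𝒰 ∧ x ∈ U}.encard ≤ (m : ℕ∞)

/-- `asdim (X, ℰ) ≤ n`. -/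
def AsdimLE (ℰ : CoarseStruct X) (n : ℕ) : Prop :=
  ∀ ⦃L⦄, ℰ.IsEntourage L → ∃ 𝒰 : Set (Set X),
    IsCover 𝒰 ∧ UniformlyBounded ℰ 𝒰 ∧ HasAppetite 𝒰 L ∧ MultiplicityLE 𝒰 (n + 1)

end CoarseStruct

namespace AsdimAux

open CoarseStruct

variable {X : Type*}

def comp (E F : Set (X × X)) : Set (X × X) := {p | ∃ y, (p.1, y) ∈ E ∧ (y, p.2) ∈ F}

def pw (M : Set (X × X)) : ℕ → Set (X × X)
  | 0 => {p | p.1 = p.2}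
  | k + 1 => comp (pw M k) M

theorem pw_refl {M : Set (X × X)} (hrefl : ∀ x : X, (x, x) ∈ M) :
    ∀ k (x : X), (x, x) ∈ pw M k := by
  intro k x
  induction k with
  | zero => rfl
  | succ k ih => exact ⟨x, ih, hrefl x⟩

theorem pw_succ_of {M : Set (X × X)} {m : ℕ} {z y x : X}
    (h1 : (z, y) ∈ pw M m) (h2 : (y, x) ∈ M) : (z, x) ∈ pw M (m + 1) :=
  ⟨y, h1, h2⟩

theorem pw_mono {M : Set (X × X)} (hrefl : ∀ x : X, (x, x) ∈ M) :
    ∀ {m m' : ℕ}, m ≤ m' → pw M m ⊆ pw M m' := by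
  intro m m' h
  induction h with
  | refl => exact subset_rfl
  | step h ih => exact fun p hp => ⟨p.2, ih hp, hrefl p.2⟩

theorem pw_ent {ℰ : CoarseStruct X} {M : Set (X × X)} (hM : ℰ.IsEntourage M) (k : ℕ) :
    ℰ.IsEntourage (pw M k) := by
  induction k with
  | zero => exact ℰ.diagonal_mem
  | succ k ih => exact ℰ.comp_mem ih hM

/-- The symmetrised reflexive closure of `L`. -/
def sym (L : Set (X × X)) : Set (X × X) := ({p | p.1 = p.2} ∪ L) ∪ {p | (p.2, p.1) ∈ L}

theorem sym_ent {ℰ : CoarseStruct X} {L : Set (X × X)} (hL : ℰ.IsEntourage L) :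
    ℰ.IsEntourage (sym L) :=
  ℰ.union_mem (ℰ.union_mem ℰ.diagonal_mem hL) (ℰ.inv_mem hL)

theorem sym_refl (L : Set (X × X)) (x : X) : (x, x) ∈ sym L := Or.inl (Or.inl rfl)

theorem sym_symm {L : Set (X × X)} {x y : X} (h : (x, y) ∈ sym L) : (y, x) ∈ sym L := by
  rcases h with (h | h) | h
  · exact Or.inl (Or.inl h.symm)
  · exact Or.inr h
  · exact Or.inl (Or.inr h)

theorem subset_sym (L : Set (X × X)) : L ⊆ sym L := fun p hp => Or.inl (Or.inr hp)

/-- (i) implies (ii). -/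
theorem lemA {ℰ : CoarseStruct X} {n : ℕ} (h : AsdimLE ℰ n) :
    ∀ ⦃L⦄, ℰ.IsEntourage L → ∃ 𝒱 : Fin (n + 1) → Set (Set X),
      IsCover (⋃ i, 𝒱 i) ∧ UniformlyBounded ℰ (⋃ i, 𝒱 i) ∧
      ∀ i, ∀ A ∈ 𝒱 i, ∀ B ∈ 𝒱 i, A ≠ B → (A ×ˢ B) ∩ L = ∅ := by
  intro L hL
  set M := sym L with hMdef
  have hrefl := sym_refl L
  obtain ⟨𝒰, hcov, hub, happ, hmult⟩ := h (pw_ent (sym_ent hL) (2 * (n + 1)))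
  -- levels
  set t : ℕ → ℕ := fun j => 2 * (n + 1 - j) with htdef
  -- shrinkings and depth families
  set S : X → ℕ → Set (Set X) := fun x j => {U | U ∈ 𝒰 ∧ ball (pw M (t j)) x ⊆ U} with hSdef
  have hStop : ∀ x : X, S x (n + 1) = {U | U ∈ 𝒰 ∧ x ∈ U} := by
    intro x
    ext U
    simp only [hSdef, Set.mem_setOf_eq, htdef]
    constructor
    · rintro ⟨h1, h2⟩
      exact ⟨h1, h2 (by simp only [Nat.sub_self, Nat.mul_zero]; exact rfl : x ∈ ball (pw M (2 * (n + 1 - (n + 1)))) x)⟩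
    · rintro ⟨h1, h2⟩
      refine ⟨h1, fun y hy => ?_⟩
      simp only [Nat.sub_self, Nat.mul_zero] at hy
      have : y = x := hy
      exact this ▸ h2
  have hSfin : ∀ x : X, (S x (n + 1)).Finite := by
    intro x
    rw [hStop]
    exact Set.finite_of_encard_le_coe (hmult x)
  have hSmono : ∀ (x : X) {j j' : ℕ}, j ≤ j' → S x j ⊆ S x j' := by
    intro x j j' hjj U hU
    refine ⟨hU.1, fun y hy => hU.2 ?_⟩
    have ht' : t j' ≤ t j := by simp only [htdef]; omega
    exact pw_mono hrefl ht' hy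
  have hScard : ∀ (x : X) (j : ℕ), j ≤ n + 1 → (S x j).ncard ≤ n + 1 := by
    intro x j hj
    calc (S x j).ncard ≤ (S x (n + 1)).ncard :=
          Set.ncard_le_ncard (hSmono x hj) (hSfin x)
      _ ≤ n + 1 := by
          have := hmult x
          rw [← hStop x] at this
          exact (Set.encard_le_coe_iff_finite_ncard_le.1 this).2
  have hSne : ∀ x : X, (S x 0).Nonempty := by
    intro x
    obtain ⟨U, hU, hball⟩ := happ x
    exact ⟨U, hU, by simpa [hSdef, htdef] using hball⟩
  -- key propagation lemma
  have hkey : ∀ (x y : X) (j : ℕ), j ≤ n → (y, x) ∈ M → S x j ⊆ S y (j + 1) := by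
    intro x y j hj hyx U hU
    refine ⟨hU.1, fun z hz => hU.2 ?_⟩
    have h1 : (z, x) ∈ pw M (t (j + 1) + 1) := pw_succ_of hz hyx
    have h2 : t (j + 1) + 1 ≤ t j := by simp only [htdef]; omega
    exact pw_mono hrefl h2 h1
  -- plateau existence
  have hplat : ∀ x : X, ∃ j ≤ n, S x j = S x (j + 1) := by
    intro x
    by_contra hcon
    push_neg at hcon
    have hstrict : ∀ j ≤ n, S x j ⊂ S x (j + 1) := fun j hj =>
      (hSmono x (Nat.le_succ j)).ssubset_of_ne (hcon j hj)
    have hgrow : ∀ j ≤ n + 1, j + 1 ≤ (S x j).ncard := by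
      intro j hj
      induction j with
      | zero =>
        have hne := hSne x
        have hfin : (S x 0).Finite := (hSfin x).subset (hSmono x (by omega))
        have := hne.ncard_pos hfin
        omega
      | succ j ih =>
        have hj' : j ≤ n := by omega
        have h1 := ih (by omega)
        have hfin : (S x (j + 1)).Finite := (hSfin x).subset (hSmono x (by omega))
        have := Set.ncard_lt_ncard (hstrict j hj') hfin
        omega
      
    have := hgrow (n + 1) le_rfl
    have := hScard x (n + 1) le_rfl
    omega
  -- the plateau sets
  set V : Set (Set X) → Set X := fun σ => {x | ∃ j ≤ n, S x j = σ ∧ S x (j + 1) = σ} with hVdef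
  refine ⟨fun i => {A | ∃ σ : Set (Set X), σ.Finite ∧ σ.ncard = (i : ℕ) + 1 ∧ A = V σ},
    ?_, ?_, ?_⟩
  · -- cover
    intro x
    obtain ⟨j, hj, hplatj⟩ := hplat x
    set σ := S x j with hσ
    have hσfin : σ.Finite := (hSfin x).subset (hSmono x (by omega))
    have hσne : σ.Nonempty := (hSne x).mono (hSmono x (Nat.zero_le j))
    have hc1 : 1 ≤ σ.ncard := hσne.ncard_pos hσfin
    have hc2 : σ.ncard ≤ n + 1 := hScard x j (by omega)
    refine ⟨V σ, ?_, ⟨j, hj, rfl, hplatj.symm⟩⟩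
    rw [Set.mem_iUnion]
    exact ⟨⟨σ.ncard - 1, by omega⟩, σ, hσfin, by simp; omega, rfl⟩
  · -- uniformly bounded
    refine ℰ.subset_mem hub ?_
    rintro ⟨x, y⟩ hxy
    simp only [Set.mem_iUnion] at hxy ⊢
    obtain ⟨A, ⟨i, σ, hσfin, hσcard, rfl⟩, hxyA⟩ := hxy
    have hσne : σ.Nonempty := Set.nonempty_of_ncard_ne_zero (by omega)
    obtain ⟨U, hUσ⟩ := hσne
    have hx : x ∈ V σ := hxyA.1
    have hy : y ∈ V σ := hxyA.2
    obtain ⟨j, hj, hSj, -⟩ := hx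
    obtain ⟨k, hk, hSk, -⟩ := hy
    have hUx : U ∈ S x j := hSj ▸ hUσ
    have hUy : U ∈ S y k := hSk ▸ hUσ
    refine ⟨U, hUx.1, hUx.2 (pw_refl hrefl _ x), hUy.2 (pw_refl hrefl _ y)⟩
  · -- L-disjointness
    rintro i A ⟨σ, hσfin, hσcard, rfl⟩ B ⟨τ, hτfin, hτcard, rfl⟩ hAB
    rw [Set.eq_empty_iff_forall_notMem]
    rintro ⟨x, y⟩ ⟨hxy, hLxy⟩
    obtain ⟨j, hj, hSj, hSj1⟩ := hxy.1
    obtain ⟨k, hk, hSk, hSk1⟩ := hxy.2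
    have hxyM : (x, y) ∈ M := subset_sym L hLxy
    have hyxM : (y, x) ∈ M := sym_symm hxyM
    have hστ : σ = τ := by
      rcases le_total j k with hjk | hkj
      · have h1 : σ ⊆ S y (j + 1) := hSj ▸ hkey x y j hj hyxM
        have h2 : S y (j + 1) ⊆ S y (k + 1) := hSmono y (by omega)
        have h3 : σ ⊆ τ := hSk1 ▸ (h1.trans h2)
        exact Set.eq_of_subset_of_ncard_le h3 (by omega) hτfin
      · have h1 : τ ⊆ S x (k + 1) := hSk ▸ hkey y x k hk hxyM
        have h2 : S x (k + 1) ⊆ S x (j + 1) := hSmono x (by omega)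
        have h3 : τ ⊆ σ := hSj1 ▸ (h1.trans h2)
        exact (Set.eq_of_subset_of_ncard_le h3 (by omega) hσfin).symm
    exact hAB (hστ ▸ rfl)

/-- (ii) implies (iii). -/
theorem lemB {ℰ : CoarseStruct X} {n : ℕ}
    (h : ∀ ⦃L⦄, ℰ.IsEntourage L → ∃ 𝒱 : Fin (n + 1) → Set (Set X),
      IsCover (⋃ i, 𝒱 i) ∧ UniformlyBounded ℰ (⋃ i, 𝒱 i) ∧
      ∀ i, ∀ A ∈ 𝒱 i, ∀ B ∈ 𝒱 i, A ≠ B → (A ×ˢ B) ∩ L = ∅) :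
    ∀ ⦃L⦄, ℰ.IsEntourage L → ∃ 𝒱 : Fin (n + 1) → Set (Set X),
      IsCover (⋃ i, 𝒱 i) ∧ UniformlyBounded ℰ (⋃ i, 𝒱 i) ∧
      HasAppetite (⋃ i, 𝒱 i) L ∧
      ∀ i, ∀ A ∈ 𝒱 i, ∀ B ∈ 𝒱 i, A ≠ B → A ∩ B = ∅ := by
  intro L hL
  set M := sym L with hMdef
  have hL' : ℰ.IsEntourage (comp M M) := ℰ.comp_mem (sym_ent hL) (sym_ent hL)
  obtain ⟨𝒱, hcov, hub, hdisj⟩ := h hL'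
  set enl : Set X → Set X := fun A => {y | ∃ a ∈ A, (y, a) ∈ M} with henl
  have hsub : ∀ A : Set X, A ⊆ enl A := fun A a ha => ⟨a, ha, sym_refl L a⟩
  refine ⟨fun i => enl '' 𝒱 i, ?_, ?_, ?_, ?_⟩
  · -- cover
    intro x
    obtain ⟨A, hA, hxA⟩ := hcov x
    rw [Set.mem_iUnion] at hA
    obtain ⟨i, hAi⟩ := hA
    exact ⟨enl A, Set.mem_iUnion.2 ⟨i, Set.mem_image_of_mem _ hAi⟩, hsub A hxA⟩
  · -- uniformly bounded
    set E := ⋃ U ∈ ⋃ i, 𝒱 i, U ×ˢ U with hE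
    have hF : ℰ.IsEntourage (comp M (comp E M)) :=
      ℰ.comp_mem (sym_ent hL) (ℰ.comp_mem hub (sym_ent hL))
    refine ℰ.subset_mem hF ?_
    rintro ⟨y, z⟩ hyz
    simp only [Set.mem_iUnion] at hyz
    obtain ⟨A', ⟨i, A, hAi, rfl⟩, hy, hz⟩ := hyz
    obtain ⟨a, haA, hya⟩ := hy
    obtain ⟨b, hbA, hzb⟩ := hz
    have hab : (a, b) ∈ E := by
      simp only [hE, Set.mem_iUnion]
      exact ⟨A, ⟨i, hAi⟩, haA, hbA⟩
    exact ⟨a, hya, b, hab, sym_symm hzb⟩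
  · -- appetite
    intro x
    obtain ⟨A, hA, hxA⟩ := hcov x
    rw [Set.mem_iUnion] at hA
    obtain ⟨i, hAi⟩ := hA
    refine ⟨enl A, Set.mem_iUnion.2 ⟨i, Set.mem_image_of_mem _ hAi⟩, fun y hy => ?_⟩
    exact ⟨x, hxA, subset_sym L hy⟩
  · -- disjointness
    rintro i A' ⟨A, hAi, rfl⟩ B' ⟨B, hBi, rfl⟩ hne
    have hABne : A ≠ B := fun hAB => hne (hAB ▸ rfl)
    rw [Set.eq_empty_iff_forall_notMem]
    rintro y ⟨⟨a, haA, hya⟩, ⟨b, hbB, hyb⟩⟩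
    have : (a, b) ∈ (A ×ˢ B) ∩ comp M M :=
      ⟨⟨haA, hbB⟩, y, sym_symm hya, hyb⟩
    rw [hdisj i A hAi B hBi hABne] at this
    exact this

/-- (iii) implies (i). -/
theorem lemC {ℰ : CoarseStruct X} {n : ℕ}
    (h : ∀ ⦃L⦄, ℰ.IsEntourage L → ∃ 𝒱 : Fin (n + 1) → Set (Set X),
      IsCover (⋃ i, 𝒱 i) ∧ UniformlyBounded ℰ (⋃ i, 𝒱 i) ∧
      HasAppetite (⋃ i, 𝒱 i) L ∧
      ∀ i, ∀ A ∈ 𝒱 i, ∀ B ∈ 𝒱 i, A ≠ B → A ∩ B = ∅) :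
    AsdimLE ℰ n := by
  intro L hL
  obtain ⟨𝒱, hcov, hub, happ, hdisj⟩ := h hL
  refine ⟨⋃ i, 𝒱 i, hcov, hub, happ, ?_⟩
  intro x
  classical
  set s : Set (Set X) := {U | U ∈ ⋃ i, 𝒱 i ∧ x ∈ U} with hs
  set f : Set X → Fin (n + 1) := fun U =>
    if hU : ∃ i, U ∈ 𝒱 i then hU.choose else 0 with hf
  have hinj : Set.InjOn f s := by
    intro U hU U' hU' hff
    by_contra hne
    have hUex : ∃ i, U ∈ 𝒱 i := Set.mem_iUnion.1 hU.1
    have hU'ex : ∃ i, U' ∈ 𝒱 i := Set.mem_iUnion.1 hU'.1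
    have h1 : U ∈ 𝒱 (f U) := by rw [hf]; simp only [hUex, dif_pos]; exact hUex.choose_spec
    have h2 : U' ∈ 𝒱 (f U') := by rw [hf]; simp only [hU'ex, dif_pos]; exact hU'ex.choose_spec
    rw [hff] at h1
    have := hdisj (f U') U h1 U' h2 hne
    rw [Set.eq_empty_iff_forall_notMem] at this
    exact this x ⟨hU.2, hU'.2⟩
  calc s.encard = (f '' s).encard := hinj.encard_image.symm
    _ ≤ (Set.univ : Set (Fin (n + 1))).encard := Set.encard_le_encard (Set.subset_univ _)
    _ = ((n : ℕ∞) + 1) := by simp [Set.encard_univ]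

end AsdimAux




open CoarseStruct in
/-- The three definitions of asymptotic dimension agree:
(i) multiplicity/appetite, (ii) Roe's L-disjoint families,
(iii) disjoint families with appetite. -/
theorem asdim_characterisations {X : Type*} (ℰ : CoarseStruct X) (n : ℕ) :
    (AsdimLE ℰ n ↔
      ∀ ⦃L⦄, ℰ.IsEntourage L → ∃ 𝒱 : Fin (n + 1) → Set (Set X),
        IsCover (⋃ i, 𝒱 i) ∧ UniformlyBounded ℰ (⋃ i, 𝒱 i) ∧
        ∀ i, ∀ A ∈ 𝒱 i, ∀ B ∈ 𝒱 i, A ≠ B → (A ×ˢ B) ∩ L = ∅) ∧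
    (AsdimLE ℰ n ↔
      ∀ ⦃L⦄, ℰ.IsEntourage L → ∃ 𝒱 : Fin (n + 1) → Set (Set X),
        IsCover (⋃ i, 𝒱 i) ∧ UniformlyBounded ℰ (⋃ i, 𝒱 i) ∧
        HasAppetite (⋃ i, 𝒱 i) L ∧
        ∀ i, ∀ A ∈ 𝒱 i, ∀ B ∈ 𝒱 i, A ≠ B → A ∩ B = ∅) := by
  exact ⟨⟨fun h => AsdimAux.lemA h, fun h => AsdimAux.lemC (AsdimAux.lemB h)⟩,
    ⟨fun h => AsdimAux.lemB (AsdimAux.lemA h), fun h => AsdimAux.lemC h⟩⟩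
end

section
/- Let f : (X,ℰ) → (Y,ℱ) be a coarse embedding between coarse spaces. Then for every n ∈ ℕ, if asdim(Y,ℱ) ≤ n then asdim(X,ℰ) ≤ n. -/
open CoarseStruct in
/-- A coarse embedding does not increase the asymptotic dimension. -/
theorem asdim_le_of_coarseEmbedding
    {X Y : Type*} (ℰ : CoarseStruct X) (ℱ : CoarseStruct Y) (f : X → Y)
    (hf : CoarseEmbedding ℰ ℱ f) :
    ∀ n : ℕ, AsdimLE ℱ n → AsdimLE ℰ n := by
  intro n hY L hL
  obtain ⟨hfu, hfp⟩ := hf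
  have hM : ℱ.IsEntourage (Prod.map f f '' L) := hfu hL
  obtain ⟨𝒱, hcov, hub, happ, hmul⟩ := hY hM
  refine ⟨(fun V => f ⁻¹' V) '' 𝒱, ?_, ?_, ?_, ?_⟩
  · intro x
    obtain ⟨V, hV, hxV⟩ := hcov (f x)
    exact ⟨f ⁻¹' V, ⟨V, hV, rfl⟩, hxV⟩
  · have hpre : ℰ.IsEntourage (Prod.map f f ⁻¹' (⋃ V ∈ 𝒱, V ×ˢ V)) := hfp hub
    refine ℰ.subset_mem hpre ?_
    rintro ⟨a, b⟩ hab
    rw [Set.mem_iUnion₂] at hab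
    obtain ⟨U, hU, haU, hbU⟩ := hab
    obtain ⟨V, hV, rfl⟩ := hU
    rw [Set.mem_preimage, Set.mem_iUnion₂]
    exact ⟨V, hV, haU, hbU⟩
  · intro x
    obtain ⟨V, hV, hsub⟩ := happ (f x)
    refine ⟨f ⁻¹' V, ⟨V, hV, rfl⟩, ?_⟩
    intro y hy
    exact hsub ⟨(y, x), hy, rfl⟩
  · intro x
    have hsub : {U | U ∈ (fun V => f ⁻¹' V) '' 𝒱 ∧ x ∈ U} ⊆
        (fun V => f ⁻¹' V) '' {V | V ∈ 𝒱 ∧ f x ∈ V} := by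
      rintro U ⟨⟨V, hV, rfl⟩, hxU⟩
      exact ⟨V, ⟨hV, hxU⟩, rfl⟩
    calc {U | U ∈ (fun V => f ⁻¹' V) '' 𝒱 ∧ x ∈ U}.encard
        ≤ ((fun V => f ⁻¹' V) '' {V | V ∈ 𝒱 ∧ f x ∈ V}).encard := Set.encard_mono hsub
      _ ≤ {V | V ∈ 𝒱 ∧ f x ∈ V}.encard := Set.encard_image_le _ _
      _ ≤ _ := hmul (f x)
end

section
/- If coarse spaces (X,ℰ) and (Y,ℱ) are coarsely equivalent, then for every n ∈ ℕ, asdim(X,ℰ) ≤ n if and only if asdim(Y,ℱ) ≤ n (asymptotic dimension is a coarse invariant). -/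
open CoarseStruct in
/-- Preimages of entourages under half of a coarse equivalence are entourages. -/
lemma preimage_entourage_aux
    {X Y : Type*} (ℰ : CoarseStruct X) (ℱ : CoarseStruct Y)
    (f : X → Y) (g : Y → X) (hgu : CoarselyUniform ℱ ℰ g)
    (hc : Close ℰ (g ∘ f) id) :
    ∀ ⦃F⦄, ℱ.IsEntourage F → ℰ.IsEntourage (Prod.map f f ⁻¹' F) := by
  intro F hF
  set C : Set (X × X) := Set.range fun s => (g (f s), s) with hCdef
  have hC : ℰ.IsEntourage C := hc
  have hCinv : ℰ.IsEntourage {p : X × X | (p.2, p.1) ∈ C} := ℰ.inv_mem hC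
  have hgF : ℰ.IsEntourage (Prod.map g g '' F) := hgu hF
  have h1 : ℰ.IsEntourage
      {p : X × X | ∃ y, (p.1, y) ∈ {q : X × X | (q.2, q.1) ∈ C} ∧
        (y, p.2) ∈ Prod.map g g '' F} := ℰ.comp_mem hCinv hgF
  have h2 : ℰ.IsEntourage
      {p : X × X | ∃ y, (p.1, y) ∈
        {q : X × X | ∃ z, (q.1, z) ∈ {r : X × X | (r.2, r.1) ∈ C} ∧
          (z, q.2) ∈ Prod.map g g '' F} ∧ (y, p.2) ∈ C} := ℰ.comp_mem h1 hC
  refine ℰ.subset_mem h2 ?_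
  rintro ⟨x, x'⟩ hx
  refine ⟨g (f x'), ⟨g (f x), ⟨x, rfl⟩, ⟨(f x, f x'), hx, rfl⟩⟩, ⟨x', rfl⟩⟩

open CoarseStruct in
/-- If `f : X → Y` is coarsely uniform with coarsely uniform quasi-inverse `g`,
then `asdim Y ≤ n` implies `asdim X ≤ n`. -/
lemma asdimle_of_half_equiv
    {X Y : Type*} (ℰ : CoarseStruct X) (ℱ : CoarseStruct Y)
    (f : X → Y) (g : Y → X) (hfu : CoarselyUniform ℰ ℱ f)
    (hgu : CoarselyUniform ℱ ℰ g) (hc : Close ℰ (g ∘ f) id)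
    {n : ℕ} (hY : AsdimLE ℱ n) : AsdimLE ℰ n := by
  intro L hL
  obtain ⟨𝒱, hcov, hub, happ, hmult⟩ := hY (hfu hL)
  refine ⟨(fun V => f ⁻¹' V) '' 𝒱, ?_, ?_, ?_, ?_⟩
  · intro x
    obtain ⟨V, hV, hxV⟩ := hcov (f x)
    exact ⟨f ⁻¹' V, ⟨V, hV, rfl⟩, hxV⟩
  · refine ℰ.subset_mem
      (preimage_entourage_aux ℰ ℱ f g hgu hc hub) ?_
    rintro ⟨a, b⟩ hab
    simp only [Set.mem_iUnion, Set.mem_image, Set.mem_prod, Set.mem_preimage,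
      Prod.map_apply, exists_prop] at hab ⊢
    obtain ⟨U, ⟨V, hV, rfl⟩, ha, hb⟩ := hab
    exact ⟨V, hV, ha, hb⟩
  · intro x
    obtain ⟨V, hV, hball⟩ := happ (f x)
    refine ⟨f ⁻¹' V, ⟨V, hV, rfl⟩, ?_⟩
    intro y hy
    exact hball ⟨(y, x), hy, rfl⟩
  · intro x
    calc {U | U ∈ (fun V => f ⁻¹' V) '' 𝒱 ∧ x ∈ U}.encard
        ≤ ((fun V => f ⁻¹' V) '' {V | V ∈ 𝒱 ∧ f x ∈ V}).encard := by
          refine Set.encard_mono ?_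
          rintro U ⟨⟨V, hV, rfl⟩, hxU⟩
          exact ⟨V, ⟨hV, hxU⟩, rfl⟩
      _ ≤ {V | V ∈ 𝒱 ∧ f x ∈ V}.encard := Set.encard_image_le _ _
      _ ≤ ((n + 1 : ℕ) : ℕ∞) := hmult (f x)

open CoarseStruct in
/-- Asymptotic dimension is a coarse invariant. -/
theorem asdim_coarse_invariant
    {X Y : Type*} (ℰ : CoarseStruct X) (ℱ : CoarseStruct Y)
    (f : X → Y) (hf : CoarseEquivalence ℰ ℱ f) :
    ∀ n : ℕ, AsdimLE ℰ n ↔ AsdimLE ℱ n := by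
  obtain ⟨⟨hfu, _⟩, g, ⟨hgu, _⟩, hgf, hfg⟩ := hf
  intro n
  constructor
  · exact asdimle_of_half_equiv ℱ ℰ g f hgu hfu hfg
  · exact asdimle_of_half_equiv ℰ ℱ f g hfu hgu hgf
end

section
/- Let ℰ be a coarse structure on a set X and let ℰ_cn be the connected coarse structure generated by ℰ. Then for every n ∈ ℕ, asdim(X,ℰ) ≤ n if and only if asdim(X,ℰ_cn) ≤ n. -/
namespace CoarseStruct

/-- A coarse structure is connected if every point of `X × X` lies in some entourage. -/
def IsConnected {X : Type*} (ℰ : CoarseStruct X) : Prop :=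
  ∀ p : X × X, ∃ E, ℰ.IsEntourage E ∧ p ∈ E

/-- `ℰ ≤ ℱ` : every `ℰ`-entourage is an `ℱ`-entourage. -/
def LE {X : Type*} (ℰ ℱ : CoarseStruct X) : Prop :=
  ∀ ⦃E⦄, ℰ.IsEntourage E → ℱ.IsEntourage E

end CoarseStruct

/-!
The entourages of the connected coarse structure generated by `ℰ` are exactly the sets contained
in some `E ∪ K × K`, with `E ∈ ℰ` and `K` a finite union of `ℰ`-bounded sets.

Given a cover that is good for `ℰ`, merge all of its members meeting the finitely bounded set
`T = K ∪ E(K)` into one set together with `T`: this set is again finitely bounded, the new cover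
has appetite `E ∪ K × K`, and every member through a point comes from a member of the old cover
through that point, so the multiplicity does not grow.

Conversely, intersecting a cover that is good for `ℰ_cn` with the coarse components of `ℰ` keeps
its appetite for `ℰ`-entourages and its multiplicity, and makes it `ℰ`-uniformly bounded: the
pairs in `K × K` that lie in a common component are controlled by the finitely many pairs of
centres of `K` that do.
-/

namespace CoarseStruct

open Set

variable {X : Type*}

section Entourages

variable (ℰ : CoarseStruct X)

def Linked (x y : X) : Prop := ∃ E, ℰ.IsEntourage E ∧ (x, y) ∈ E

lemma linked_refl (x : X) : ℰ.Linked x x := ⟨_, ℰ.diagonal_mem, rfl⟩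

lemma isEntourage_empty : ℰ.IsEntourage ∅ :=
  ℰ.subset_mem ℰ.diagonal_mem (empty_subset _)

lemma isEntourage_of_finite {F : Set (X × X)} (hF : F.Finite)
    (h : ∀ p ∈ F, ℰ.Linked p.1 p.2) : ℰ.IsEntourage F := by
  refine Finite.induction_on_subset (motive := fun t _ => ℰ.IsEntourage t) F hF
    ℰ.isEntourage_empty ?_
  intro p t hp _ _ ht
  obtain ⟨E, hE, hpE⟩ := h p hp
  exact ℰ.subset_mem (ℰ.union_mem hE ht) (insert_subset (Or.inl hpE) subset_union_right)

def IsFinitelyBounded (K : Set X) : Prop :=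
  ∃ (s : Set X) (E : Set (X × X)), s.Finite ∧ ℰ.IsEntourage E ∧ K ⊆ ⋃ x ∈ s, ball E x

lemma _root_.Set.Finite.isFinitelyBounded {K : Set X} (hK : K.Finite) :
    ℰ.IsFinitelyBounded K :=
  ⟨K, _, hK, ℰ.diagonal_mem, fun _ hx => mem_biUnion hx rfl⟩

variable {ℰ}

lemma Linked.symm {x y : X} (h : ℰ.Linked x y) : ℰ.Linked y x :=
  let ⟨_, hE, hxy⟩ := h
  ⟨_, ℰ.inv_mem hE, hxy⟩

lemma Linked.trans {x y z : X} (h₁ : ℰ.Linked x y) (h₂ : ℰ.Linked y z) : ℰ.Linked x z :=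
  let ⟨_, hE, hxy⟩ := h₁
  let ⟨_, hF, hyz⟩ := h₂
  ⟨_, ℰ.comp_mem hE hF, y, hxy, hyz⟩

lemma Linked.of_le {ℱ : CoarseStruct X} (hle : LE ℰ ℱ) {x y : X} (h : ℰ.Linked x y) :
    ℱ.Linked x y :=
  let ⟨_, hE, hxy⟩ := h
  ⟨_, hle hE, hxy⟩

lemma IsFinitelyBounded.mono {K K' : Set X} (h : ℰ.IsFinitelyBounded K) (hK : K' ⊆ K) :
    ℰ.IsFinitelyBounded K' :=
  let ⟨s, E, hs, hE, hKs⟩ := h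
  ⟨s, E, hs, hE, hK.trans hKs⟩

lemma IsFinitelyBounded.union {K K' : Set X} (h : ℰ.IsFinitelyBounded K)
    (h' : ℰ.IsFinitelyBounded K') : ℰ.IsFinitelyBounded (K ∪ K') := by
  obtain ⟨s, E, hs, hE, hKs⟩ := h
  obtain ⟨s', E', hs', hE', hKs'⟩ := h'
  refine ⟨s ∪ s', E ∪ E', hs.union hs', ℰ.union_mem hE hE', ?_⟩
  rintro x (hx | hx)
  · obtain ⟨a, ha, hxa⟩ := mem_iUnion₂.1 (hKs hx)
    exact mem_biUnion (Or.inl ha) (Or.inl hxa)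
  · obtain ⟨a, ha, hxa⟩ := mem_iUnion₂.1 (hKs' hx)
    exact mem_biUnion (Or.inr ha) (Or.inr hxa)

lemma IsFinitelyBounded.thickening {K : Set X} (h : ℰ.IsFinitelyBounded K)
    {F : Set (X × X)} (hF : ℰ.IsEntourage F) :
    ℰ.IsFinitelyBounded {y | ∃ k ∈ K, (y, k) ∈ F} := by
  obtain ⟨s, E, hs, hE, hKs⟩ := h
  refine ⟨s, _, hs, ℰ.comp_mem hF hE, ?_⟩
  rintro y ⟨k, hk, hyk⟩
  obtain ⟨a, ha, hka⟩ := mem_iUnion₂.1 (hKs hk)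
  exact mem_biUnion ha ⟨k, hyk, hka⟩

lemma IsFinitelyBounded.isEntourage_prod_inter_linked {ℱ : CoarseStruct X} (hle : LE ℰ ℱ)
    {K : Set X} (hK : ℰ.IsFinitelyBounded K) :
    ℱ.IsEntourage (K ×ˢ K ∩ {p | ℱ.Linked p.1 p.2}) := by
  obtain ⟨s, G, hs, hG, hKs⟩ := hK
  have hH : ℱ.IsEntourage (s ×ˢ s ∩ {p | ℱ.Linked p.1 p.2}) :=
    ℱ.isEntourage_of_finite ((hs.prod hs).subset inter_subset_left) fun p hp => hp.2
  refine ℱ.subset_mem (ℱ.comp_mem (hle hG) (ℱ.comp_mem hH (ℱ.inv_mem (hle hG)))) ?_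
  rintro ⟨u, v⟩ ⟨⟨hu, hv⟩, huv⟩
  obtain ⟨a, ha, hua⟩ := mem_iUnion₂.1 (hKs hu)
  obtain ⟨b, hb, hvb⟩ := mem_iUnion₂.1 (hKs hv)
  have hab : ℱ.Linked a b :=
    ((Linked.of_le hle ⟨G, hG, hua⟩).symm.trans huv).trans (Linked.of_le hle ⟨G, hG, hvb⟩)
  exact ⟨a, hua, b, ⟨⟨ha, hb⟩, hab⟩, hvb⟩

end Entourages

section ConnectedGen

variable (ℰ : CoarseStruct X)

def connectedGen : CoarseStruct X where
  IsEntourage D := ∃ E K, ℰ.IsEntourage E ∧ ℰ.IsFinitelyBounded K ∧ D ⊆ E ∪ K ×ˢ K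
  subset_mem := by
    rintro D F ⟨E, K, hE, hK, hF⟩ hDF
    exact ⟨E, K, hE, hK, hDF.trans hF⟩
  union_mem := by
    rintro D D' ⟨E, K, hE, hK, hD⟩ ⟨E', K', hE', hK', hD'⟩
    refine ⟨E ∪ E', K ∪ K', ℰ.union_mem hE hE', hK.union hK', ?_⟩
    rintro p (hp | hp)
    · rcases hD hp with h | ⟨h₁, h₂⟩
      · exact Or.inl (Or.inl h)
      · exact Or.inr ⟨Or.inl h₁, Or.inl h₂⟩
    · rcases hD' hp with h | ⟨h₁, h₂⟩
      · exact Or.inl (Or.inr h)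
      · exact Or.inr ⟨Or.inr h₁, Or.inr h₂⟩
  diagonal_mem := ⟨_, ∅, ℰ.diagonal_mem, finite_empty.isFinitelyBounded ℰ, subset_union_left⟩
  inv_mem := by
    rintro D ⟨E, K, hE, hK, hD⟩
    refine ⟨_, K, ℰ.inv_mem hE, hK, ?_⟩
    rintro ⟨x, y⟩ hp
    rcases hD hp with h | ⟨h₁, h₂⟩
    · exact Or.inl h
    · exact Or.inr ⟨h₂, h₁⟩
  comp_mem := by
    rintro D D' ⟨E, K, hE, hK, hD⟩ ⟨E', K', hE', hK', hD'⟩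
    refine ⟨_, (K ∪ K') ∪ ({y | ∃ k ∈ K', (y, k) ∈ E} ∪
        {y | ∃ k ∈ K, (y, k) ∈ {p : X × X | (p.2, p.1) ∈ E'}}), ℰ.comp_mem hE hE',
      (hK.union hK').union ((hK'.thickening hE).union (hK.thickening (ℰ.inv_mem hE'))), ?_⟩
    rintro ⟨x, z⟩ ⟨y, hxy, hyz⟩
    rcases hD hxy with h₁ | h₁ <;> rcases hD' hyz with h₂ | h₂
    · exact Or.inl ⟨y, h₁, h₂⟩
    · exact Or.inr ⟨Or.inr (Or.inl ⟨y, h₂.1, h₁⟩), Or.inl (Or.inr h₂.2)⟩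
    · exact Or.inr ⟨Or.inl (Or.inl h₁.1), Or.inr (Or.inr ⟨y, h₁.2, h₂⟩)⟩
    · exact Or.inr ⟨Or.inl (Or.inl h₁.1), Or.inl (Or.inr h₂.2)⟩

lemma isConnected_connectedGen : IsConnected ℰ.connectedGen := by
  rintro ⟨x, y⟩
  refine ⟨{(x, y)}, ⟨∅, {x, y}, ℰ.isEntourage_empty, (toFinite _).isFinitelyBounded ℰ, ?_⟩, rfl⟩
  rintro _ rfl
  exact Or.inr ⟨mem_insert _ _, mem_insert_of_mem _ rfl⟩

lemma le_connectedGen : LE ℰ ℰ.connectedGen := fun E hE =>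
  ⟨E, ∅, hE, finite_empty.isFinitelyBounded ℰ, subset_union_left⟩

variable {ℰ}

lemma connectedGen_le {ℱ : CoarseStruct X} (hc : IsConnected ℱ) (hle : LE ℰ ℱ) :
    LE ℰ.connectedGen ℱ := by
  rintro D ⟨E, K, hE, hK, hD⟩
  refine ℱ.subset_mem (ℱ.union_mem (hle hE) (hK.isEntourage_prod_inter_linked hle)) ?_
  exact hD.trans (union_subset_union_right _ fun p hp => ⟨hp, hc p⟩)

lemma LE.antisymm {ℱ : CoarseStruct X} (h₁ : LE ℰ ℱ) (h₂ : LE ℱ ℰ) : ℰ = ℱ := by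
  cases ℰ
  cases ℱ
  congr
  funext E
  exact propext ⟨@h₁ E, @h₂ E⟩

lemma eq_connectedGen {ℰcn : CoarseStruct X} (hcn : IsConnected ℰcn) (hle : LE ℰ ℰcn)
    (hmin : ∀ 𝒟 : CoarseStruct X, IsConnected 𝒟 → LE ℰ 𝒟 → LE ℰcn 𝒟) :
    ℰcn = ℰ.connectedGen :=
  (hmin _ ℰ.isConnected_connectedGen ℰ.le_connectedGen).antisymm (connectedGen_le hcn hle)

end ConnectedGen

section MergeCover

variable {𝒰 : Set (Set X)} {T : Set X}

def mergeMeeting (𝒰 : Set (Set X)) (T : Set X) : Set X :=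
  T ∪ ⋃₀ {U | U ∈ 𝒰 ∧ ¬Disjoint U T}

def mergeCover (𝒰 : Set (Set X)) (T : Set X) : Set (Set X) :=
  insert (mergeMeeting 𝒰 T) {U | U ∈ 𝒰 ∧ Disjoint U T}

lemma exists_mem_mergeCover_superset {U : Set X} (hU : U ∈ 𝒰) :
    ∃ V ∈ mergeCover 𝒰 T, U ⊆ V := by
  by_cases hUT : Disjoint U T
  · exact ⟨U, Or.inr ⟨hU, hUT⟩, subset_rfl⟩
  · exact ⟨_, mem_insert _ _, fun x hx => Or.inr ⟨U, ⟨hU, hUT⟩, hx⟩⟩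

lemma IsCover.mergeCover (h : IsCover 𝒰) : IsCover (mergeCover 𝒰 T) := fun x =>
  let ⟨_, hU, hx⟩ := h x
  let ⟨V, hV, hUV⟩ := exists_mem_mergeCover_superset hU
  ⟨V, hV, hUV hx⟩

lemma MultiplicityLE.mergeCover {m : ℕ} (hc : IsCover 𝒰) (hm : MultiplicityLE 𝒰 m) :
    MultiplicityLE (mergeCover 𝒰 T) m := by
  classical
  intro z
  let φ : Set X → Set X := fun U => if Disjoint U T then U else mergeMeeting 𝒰 T
  refine (encard_le_encard (t := φ '' {U | U ∈ 𝒰 ∧ z ∈ U}) ?_).trans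
    ((encard_image_le _ _).trans (hm z))
  rintro V ⟨rfl | ⟨hV, hVT⟩, hzV⟩
  · obtain ⟨U, hU, hUT, hzU⟩ : ∃ U ∈ 𝒰, ¬Disjoint U T ∧ z ∈ U := by
      rcases hzV with hzT | ⟨U, ⟨hU, hUT⟩, hzU⟩
      · obtain ⟨U, hU, hzU⟩ := hc z
        exact ⟨U, hU, not_disjoint_iff.2 ⟨z, hzU, hzT⟩, hzU⟩
      · exact ⟨U, hU, hUT, hzU⟩
    exact ⟨U, ⟨hU, hzU⟩, if_neg hUT⟩
  · exact ⟨V, ⟨hV, hzV⟩, if_pos hVT⟩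

lemma biUnion_mergeCover_prod_subset :
    ⋃ V ∈ mergeCover 𝒰 T, V ×ˢ V ⊆
      (⋃ U ∈ 𝒰, U ×ˢ U) ∪ mergeMeeting 𝒰 T ×ˢ mergeMeeting 𝒰 T := by
  intro p hp
  obtain ⟨V, hV, hpV⟩ := mem_iUnion₂.1 hp
  rcases hV with rfl | ⟨hV, -⟩
  · exact Or.inr hpV
  · exact Or.inl (mem_biUnion hV hpV)

variable {ℰ : CoarseStruct X}

lemma IsFinitelyBounded.mergeMeeting (hT : ℰ.IsFinitelyBounded T)
    (hb : UniformlyBounded ℰ 𝒰) : ℰ.IsFinitelyBounded (mergeMeeting 𝒰 T) := by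
  refine (hT.union (hT.thickening hb)).mono ?_
  rintro y (hy | ⟨U, ⟨hU, hUT⟩, hyU⟩)
  · exact Or.inl hy
  · obtain ⟨t, htU, htT⟩ := not_disjoint_iff.1 hUT
    exact Or.inr ⟨t, htT, mem_biUnion hU ⟨hyU, htU⟩⟩

lemma UniformlyBounded.mergeCover (hb : UniformlyBounded ℰ 𝒰) (hT : ℰ.IsFinitelyBounded T) :
    UniformlyBounded ℰ.connectedGen (mergeCover 𝒰 T) :=
  ⟨_, _, hb, hT.mergeMeeting hb, biUnion_mergeCover_prod_subset⟩

lemma HasAppetite.mergeCover {E L : Set (X × X)} {K : Set X} (h : HasAppetite 𝒰 E)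
    (hL : L ⊆ E ∪ K ×ˢ K) : HasAppetite (mergeCover 𝒰 (K ∪ {y | ∃ k ∈ K, (y, k) ∈ E})) L := by
  intro x
  by_cases hx : x ∈ K
  · refine ⟨_, mem_insert _ _, fun y hy => Or.inl ?_⟩
    rcases hL hy with h | h
    · exact Or.inr ⟨x, hx, h⟩
    · exact Or.inl h.1
  · obtain ⟨U, hU, hxU⟩ := h x
    exact (exists_mem_mergeCover_superset hU).imp fun _ ⟨hV, hUV⟩ =>
      ⟨hV, fun y hy => hUV (hxU ((hL hy).resolve_right fun h => hx h.2))⟩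

lemma AsdimLE.connectedGen {n : ℕ} (h : AsdimLE ℰ n) : AsdimLE ℰ.connectedGen n := by
  rintro L ⟨E, K, hE, hK, hL⟩
  obtain ⟨𝒰, hc, hb, happ, hm⟩ := h hE
  have hT : ℰ.IsFinitelyBounded (K ∪ {y | ∃ k ∈ K, (y, k) ∈ E}) := hK.union (hK.thickening hE)
  exact ⟨_, hc.mergeCover, hb.mergeCover hT, happ.mergeCover hL, hm.mergeCover hc⟩

end MergeCover

section Components

variable (ℰ : CoarseStruct X)

def component (x : X) : Set X := {y | ℰ.Linked y x}

def splitByComponents (𝒱 : Set (Set X)) : Set (Set X) :=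
  image2 (· ∩ ·) 𝒱 (range ℰ.component)

variable {ℰ} {𝒱 : Set (Set X)}

lemma component_eq_of_mem {x y : X} (h : y ∈ ℰ.component x) : ℰ.component y = ℰ.component x :=
  ext fun _ => ⟨fun hz => hz.trans h, fun hz => hz.trans h.symm⟩

lemma IsCover.splitByComponents (h : IsCover 𝒱) : IsCover (ℰ.splitByComponents 𝒱) := fun x =>
  let ⟨_, hV, hx⟩ := h x
  ⟨_, mem_image2_of_mem hV (mem_range_self x), hx, ℰ.linked_refl x⟩

lemma HasAppetite.splitByComponents {L : Set (X × X)} (h : HasAppetite 𝒱 L)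
    (hL : ℰ.IsEntourage L) : HasAppetite (ℰ.splitByComponents 𝒱) L := fun x =>
  let ⟨_, hV, hxV⟩ := h x
  ⟨_, mem_image2_of_mem hV (mem_range_self x), fun _ hy => ⟨hxV hy, L, hL, hy⟩⟩

lemma MultiplicityLE.splitByComponents {m : ℕ} (h : MultiplicityLE 𝒱 m) :
    MultiplicityLE (ℰ.splitByComponents 𝒱) m := by
  intro z
  have hsub : {W | W ∈ ℰ.splitByComponents 𝒱 ∧ z ∈ W} ⊆
      (· ∩ ℰ.component z) '' {V | V ∈ 𝒱 ∧ z ∈ V} := by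
    rintro _ ⟨⟨V, hV, _, ⟨x, rfl⟩, rfl⟩, hzV, hzx⟩
    exact ⟨V, ⟨hV, hzV⟩, by rw [component_eq_of_mem hzx]⟩
  exact (encard_le_encard hsub).trans ((encard_image_le _ _).trans (h z))

lemma UniformlyBounded.splitByComponents (h : UniformlyBounded ℰ.connectedGen 𝒱) :
    UniformlyBounded ℰ (ℰ.splitByComponents 𝒱) := by
  obtain ⟨E, K, hE, hK, hsub⟩ := h
  refine ℰ.subset_mem (ℰ.union_mem hE (hK.isEntourage_prod_inter_linked fun _ => id)) ?_
  intro p hp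
  obtain ⟨_, ⟨V, hV, _, ⟨x, rfl⟩, rfl⟩, ⟨hp₁V, hp₁x⟩, hp₂V, hp₂x⟩ := mem_iUnion₂.1 hp
  rcases hsub (mem_biUnion hV ⟨hp₁V, hp₂V⟩) with h | h
  · exact Or.inl h
  · exact Or.inr ⟨h, hp₁x.trans hp₂x.symm⟩

lemma AsdimLE.of_connectedGen {n : ℕ} (h : AsdimLE ℰ.connectedGen n) : AsdimLE ℰ n := by
  intro L hL
  obtain ⟨𝒱, hc, hb, happ, hm⟩ := h (ℰ.le_connectedGen hL)
  exact ⟨_, hc.splitByComponents, hb.splitByComponents, happ.splitByComponents hL,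
    hm.splitByComponents⟩

end Components

end CoarseStruct

open CoarseStruct in
/-- Passing to the connected coarse structure generated by `ℰ` does not change
the asymptotic dimension. -/
theorem asdim_connected_generated {X : Type*} (ℰ ℰcn : CoarseStruct X)
    (hcn : IsConnected ℰcn) (hle : LE ℰ ℰcn)
    (hmin : ∀ 𝒟 : CoarseStruct X, IsConnected 𝒟 → LE ℰ 𝒟 → LE ℰcn 𝒟) :
    ∀ n : ℕ, AsdimLE ℰ n ↔ AsdimLE ℰcn n := by
  intro n
  rw [eq_connectedGen hcn hle hmin]
  exact ⟨AsdimLE.connectedGen, AsdimLE.of_connectedGen⟩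
end

section
/- Let (X,ℰ) be a coarse space and A, B ⊆ X with A ∪ B = X. Then for every n ∈ ℕ, asdim(X,ℰ) ≤ n if and only if both asdim(A,ℰ|_A) ≤ n and asdim(B,ℰ|_B) ≤ n. Equivalently, asdim(X,ℰ) = max{asdim(A,ℰ|_A), asdim(B,ℰ|_B)}. -/
namespace CoarseStruct

variable {X : Type*}

/-- The restriction of a coarse structure to a subset `A ⊆ X`: the entourages are
the traces `E ∩ (A × A)` of entourages `E` of `X`, viewed as subsets of `A × A`. -/
def restrict (ℰ : CoarseStruct X) (A : Set X) : CoarseStruct A where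
  IsEntourage E := ℰ.IsEntourage ((fun p : A × A => ((p.1 : X), (p.2 : X))) '' E)
  subset_mem _ _ hF hEF := ℰ.subset_mem hF (Set.image_mono hEF)
  union_mem := by
    intro E F hE hF
    show ℰ.IsEntourage ((fun p : A × A => ((p.1 : X), (p.2 : X))) '' (E ∪ F))
    rw [Set.image_union]
    exact ℰ.union_mem hE hF
  diagonal_mem := by
    refine ℰ.subset_mem ℰ.diagonal_mem ?_
    rintro p ⟨⟨a, b⟩, (h : a = b), rfl⟩
    show (a : X) = (b : X)
    exact congrArg Subtype.val h
  inv_mem := by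
    intro E hE
    refine ℰ.subset_mem (ℰ.inv_mem hE) ?_
    rintro p ⟨⟨a, b⟩, hab, rfl⟩
    exact ⟨(b, a), hab, rfl⟩
  comp_mem := by
    intro E F hE hF
    refine ℰ.subset_mem (ℰ.comp_mem hE hF) ?_
    rintro p ⟨⟨a, c⟩, ⟨b, h1, h2⟩, rfl⟩
    exact ⟨(b : X), ⟨(a, b), h1, rfl⟩, ⟨(b, c), h2, rfl⟩⟩

end CoarseStruct

namespace CoarseStruct

variable {X : Type*}

/-- Composition of two relations. -/
private def cmp (E F : Set (X × X)) : Set (X × X) :=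
  {p | ∃ y, (p.1, y) ∈ E ∧ (y, p.2) ∈ F}

private lemma cmp_ent {ℰ : CoarseStruct X} {E F : Set (X × X)}
    (hE : ℰ.IsEntourage E) (hF : ℰ.IsEntourage F) : ℰ.IsEntourage (cmp E F) :=
  ℰ.comp_mem hE hF

private lemma cmp_intro {E F : Set (X × X)} {x y z : X}
    (h1 : (x, y) ∈ E) (h2 : (y, z) ∈ F) : (x, z) ∈ cmp E F :=
  ⟨y, h1, h2⟩

/-- Symmetrized reflexive closure. -/
private def symb (L : Set (X × X)) : Set (X × X) :=
  L ∪ {p | (p.2, p.1) ∈ L} ∪ {p | p.1 = p.2}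

/-- Iterated composition powers of `symb L`. -/
private def pw (L : Set (X × X)) : ℕ → Set (X × X)
  | 0 => symb L
  | k + 1 => cmp (symb L) (pw L k)

private lemma pw_ent {ℰ : CoarseStruct X} {L : Set (X × X)} (hL : ℰ.IsEntourage L) :
    ∀ k, ℰ.IsEntourage (pw L k) := by
  have hS : ℰ.IsEntourage (symb L) :=
    ℰ.union_mem (ℰ.union_mem hL (ℰ.inv_mem hL)) ℰ.diagonal_mem
  intro k
  induction k with
  | zero => exact hS
  | succ k ih => exact cmp_ent hS ih

private lemma symb_refl (L : Set (X × X)) (x : X) : (x, x) ∈ symb L :=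
  Or.inr rfl

private lemma pw_refl (L : Set (X × X)) : ∀ k (x : X), (x, x) ∈ pw L k := by
  intro k x
  induction k with
  | zero => exact symb_refl L x
  | succ k ih => exact cmp_intro (symb_refl L x) ih

private lemma subset_pw (L : Set (X × X)) : L ⊆ pw L 0 :=
  fun _ h => Or.inl (Or.inl h)

private lemma pw_step_r {L : Set (X × X)} :
    ∀ k {x y z : X}, (x, y) ∈ pw L k → (y, z) ∈ symb L → (x, z) ∈ pw L (k + 1) := by
  intro k
  induction k with
  | zero => exact fun h1 h2 => cmp_intro h1 h2
  | succ k ih =>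
    rintro x y z ⟨w, hw, h⟩ h2
    exact cmp_intro hw (ih h h2)

private lemma pw_trans {L : Set (X × X)} :
    ∀ l k {x y z : X}, (x, y) ∈ pw L k → (y, z) ∈ pw L l → (x, z) ∈ pw L (k + l + 1) := by
  intro l
  induction l with
  | zero => exact fun k _ _ _ h1 h2 => pw_step_r k h1 h2
  | succ l ih =>
    rintro k x y z h1 ⟨w, hw, h2⟩
    have := ih (k + 1) (pw_step_r k h1 hw) h2
    have heq : k + 1 + l + 1 = k + (l + 1) + 1 := by omega
    rwa [heq] at this

private lemma pw_symm {L : Set (X × X)} :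
    ∀ k {x y : X}, (x, y) ∈ pw L k → (y, x) ∈ pw L k := by
  have hsymb : ∀ {x y : X}, (x, y) ∈ symb L → (y, x) ∈ symb L := by
    rintro x y ((h | h) | h)
    · exact Or.inl (Or.inr h)
    · exact Or.inl (Or.inl h)
    · exact Or.inr h.symm
  intro k
  induction k with
  | zero => exact fun h => hsymb h
  | succ k ih =>
    rintro x y ⟨w, hw, h⟩
    exact pw_trans 0 k (ih h) (hsymb hw)

private lemma pw_mono {L : Set (X × X)} : ∀ {k l : ℕ}, k ≤ l → pw L k ⊆ pw L l := by
  have step : ∀ k, pw L k ⊆ pw L (k + 1) := by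
    rintro k ⟨x, y⟩ h
    exact pw_trans 0 k h (pw_refl L 0 y)
  intro k l hkl
  induction l with
  | zero =>
    obtain rfl : k = 0 := Nat.le_zero.mp hkl
    exact fun _ h => h
  | succ l ih =>
    rcases Nat.lt_or_ge k (l + 1) with h | h
    · exact fun p hp => step l (ih (Nat.lt_succ_iff.mp h) hp)
    · obtain rfl : k = l + 1 := le_antisymm hkl h
      exact fun _ h => h

/-- Restriction does not raise asymptotic dimension. -/
private lemma asdimLE_restrict {ℰ : CoarseStruct X} (A : Set X) {n : ℕ}
    (h : AsdimLE ℰ n) : AsdimLE (ℰ.restrict A) n := by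
  intro L hL
  obtain ⟨𝒰, hcov, hbd, happ, hmult⟩ := h hL
  refine ⟨(fun U => (Subtype.val ⁻¹' U : Set A)) '' 𝒰, ?_, ?_, ?_, ?_⟩
  · intro a
    obtain ⟨U, hU, haU⟩ := hcov (a : X)
    exact ⟨_, Set.mem_image_of_mem _ hU, haU⟩
  · refine ℰ.subset_mem hbd ?_
    rintro p ⟨⟨w1, w2⟩, hw, rfl⟩
    rw [Set.mem_iUnion₂] at hw
    obtain ⟨W, hW, hw1, hw2⟩ := hw
    obtain ⟨U, hU, rfl⟩ := hW
    exact Set.mem_iUnion₂.mpr ⟨U, hU, hw1, hw2⟩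
  · intro a
    obtain ⟨U, hU, hball⟩ := happ (a : X)
    refine ⟨_, Set.mem_image_of_mem _ hU, fun y hy => ?_⟩
    have hmem : ((y : X), (a : X)) ∈ (fun p : A × A => ((p.1 : X), (p.2 : X))) '' L :=
      ⟨(y, a), hy, rfl⟩
    exact hball hmem
  · intro a
    have hsub : {W | W ∈ (fun U => (Subtype.val ⁻¹' U : Set A)) '' 𝒰 ∧ a ∈ W} ⊆
        (fun U => (Subtype.val ⁻¹' U : Set A)) '' {U | U ∈ 𝒰 ∧ (a : X) ∈ U} := by
      rintro W ⟨⟨U, hU, rfl⟩, haW⟩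
      exact ⟨U, ⟨hU, haW⟩, rfl⟩
    exact le_trans (le_trans (Set.encard_mono hsub) (Set.encard_image_le _ _))
      (hmult (a : X))

end CoarseStruct
namespace CoarseStruct

variable {X : Type*}

private lemma asdimLE_of_union {ℰ : CoarseStruct X} {A B : Set X}
    (hAB : A ∪ B = Set.univ) {n : ℕ}
    (hA : AsdimLE (ℰ.restrict A) n) (hB : AsdimLE (ℰ.restrict B) n) :
    AsdimLE ℰ n := by
  classical
  intro L hL
  have hAorB : ∀ y : X, y ∉ A → y ∈ B := by
    intro y hy
    have hmem : y ∈ A ∪ B := by rw [hAB]; exact Set.mem_univ y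
    exact hmem.resolve_left hy
  -- The cover of `A` with large appetite.
  have hLAent : (ℰ.restrict A).IsEntourage
      {p : A × A | ((p.1 : X), (p.2 : X)) ∈ pw L 5} := by
    refine ℰ.subset_mem (pw_ent hL 5) ?_
    rintro p ⟨⟨a, b⟩, hab, rfl⟩
    exact hab
  obtain ⟨𝒰₀, hU₀cov, hU₀bd, hU₀app, hU₀mult⟩ := hA hLAent
  set cU : Set (Set X) := (fun U₀ : Set A => Subtype.val '' U₀) '' 𝒰₀ with hcUdef
  have hcU_subA : ∀ U ∈ cU, U ⊆ A := by
    rintro U ⟨U₀, -, rfl⟩ x ⟨p, -, rfl⟩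
    exact p.2
  have hcU_app : ∀ a, a ∈ A → ∃ U ∈ cU, ∀ y, y ∈ A → (y, a) ∈ pw L 5 → y ∈ U := by
    intro a ha
    obtain ⟨U₀, hU₀, hball⟩ := hU₀app ⟨a, ha⟩
    refine ⟨_, ⟨U₀, hU₀, rfl⟩, fun y hy hya => ⟨⟨y, hy⟩, hball hya, rfl⟩⟩
  set d : Set (X × X) :=
    (fun p : A × A => ((p.1 : X), (p.2 : X))) '' (⋃ U₀ ∈ 𝒰₀, U₀ ×ˢ U₀) with hddef
  have hd_ent : ℰ.IsEntourage d := hU₀bd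
  have hd : ∀ U ∈ cU, ∀ u ∈ U, ∀ v ∈ U, (u, v) ∈ d := by
    rintro U ⟨U₀, hU₀, rfl⟩ u ⟨p, hp, rfl⟩ v ⟨q, hq, rfl⟩
    exact ⟨(p, q), Set.mem_iUnion₂.mpr ⟨U₀, hU₀, hp, hq⟩, rfl⟩
  have hcU_mult : ∀ y, y ∈ A → {U | U ∈ cU ∧ y ∈ U}.encard ≤ ((n + 1 : ℕ) : ℕ∞) := by
    intro y hy
    have hsub : {U | U ∈ cU ∧ y ∈ U} ⊆
        (fun U₀ : Set A => Subtype.val '' U₀) '' {U₀ | U₀ ∈ 𝒰₀ ∧ (⟨y, hy⟩ : A) ∈ U₀} := by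
      rintro U ⟨⟨U₀, hU₀, rfl⟩, hyU⟩
      obtain ⟨p, hp, hpy⟩ := hyU
      have hpe : p = ⟨y, hy⟩ := Subtype.ext hpy
      exact ⟨U₀, ⟨hU₀, hpe ▸ hp⟩, rfl⟩
    exact le_trans (le_trans (Set.encard_mono hsub) (Set.encard_image_le _ _))
      (hU₀mult ⟨y, hy⟩)
  -- The collar of `B` near `A` and the choice of nearby points in `A`.
  set P : Set X := {y | y ∈ B ∧ y ∉ A ∧ ∃ a, a ∈ A ∧ (y, a) ∈ pw L 0} with hPdef
  have hαex : ∀ y : X, ∃ a, y ∈ P → a ∈ A ∧ (y, a) ∈ pw L 0 := by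
    intro y
    by_cases hy : y ∈ P
    · obtain ⟨-, -, a, ha⟩ := hy
      exact ⟨a, fun _ => ha⟩
    · exact ⟨y, fun h => absurd h hy⟩
  choose α hα using hαex
  -- Enlarged `A`-sets.
  set hat : Set X → Set X := fun U => U ∪ {y | y ∈ P ∧ α y ∈ U} with hhatdef
  have hhatA : ∀ U ∈ cU, hat U ⊆ A ∪ P := by
    intro U hU y hy
    rcases hy with h | h
    · exact Or.inl (hcU_subA U hU h)
    · exact Or.inr h.1
  have hhat_pt : ∀ U ∈ cU, ∀ p ∈ hat U, ∃ u ∈ U, (p, u) ∈ pw L 0 ∧ (u, p) ∈ pw L 0 := by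
    intro U hU p hp
    rcases hp with h | h
    · exact ⟨p, h, pw_refl L 0 p, pw_refl L 0 p⟩
    · exact ⟨α p, h.2, (hα p h.1).2, pw_symm 0 (hα p h.1).2⟩
  -- The cover of `B` with appetite `M`.
  set M : Set (X × X) := cmp (pw L 4) (cmp d (pw L 4)) ∪ pw L 0 with hMdef
  have hMent : ℰ.IsEntourage M :=
    ℰ.union_mem (cmp_ent (pw_ent hL 4) (cmp_ent hd_ent (pw_ent hL 4))) (pw_ent hL 0)
  have hM1 : ∀ {x y z w : X}, (x, y) ∈ pw L 4 → (y, z) ∈ d → (z, w) ∈ pw L 4 →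
      (x, w) ∈ M := fun h1 h2 h3 => Or.inl (cmp_intro h1 (cmp_intro h2 h3))
  have hM0 : pw L 0 ⊆ M := fun _ h => Or.inr h
  have hMBent : (ℰ.restrict B).IsEntourage
      {p : B × B | ((p.1 : X), (p.2 : X)) ∈ M} := by
    refine ℰ.subset_mem hMent ?_
    rintro p ⟨⟨a, b⟩, hab, rfl⟩
    exact hab
  obtain ⟨𝒱₀, hV₀cov, hV₀bd, hV₀app, hV₀mult⟩ := hB hMBent
  set cV : Set (Set X) := (fun V₀ : Set B => Subtype.val '' V₀) '' 𝒱₀ with hcVdef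
  have hcV_subB : ∀ V ∈ cV, V ⊆ B := by
    rintro V ⟨V₀, -, rfl⟩ x ⟨p, -, rfl⟩
    exact p.2
  have hcV_app : ∀ b, b ∈ B → ∃ V ∈ cV, ∀ y, y ∈ B → (y, b) ∈ M → y ∈ V := by
    intro b hb
    obtain ⟨V₀, hV₀, hball⟩ := hV₀app ⟨b, hb⟩
    refine ⟨_, ⟨V₀, hV₀, rfl⟩, fun y hy hyb => ⟨⟨y, hy⟩, hball hyb, rfl⟩⟩
  set D : Set (X × X) :=
    (fun p : B × B => ((p.1 : X), (p.2 : X))) '' (⋃ V₀ ∈ 𝒱₀, V₀ ×ˢ V₀) with hDdef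
  have hD_ent : ℰ.IsEntourage D := hV₀bd
  have hD : ∀ V ∈ cV, ∀ u ∈ V, ∀ v ∈ V, (u, v) ∈ D := by
    rintro V ⟨V₀, hV₀, rfl⟩ u ⟨p, hp, rfl⟩ v ⟨q, hq, rfl⟩
    exact ⟨(p, q), Set.mem_iUnion₂.mpr ⟨V₀, hV₀, hp, hq⟩, rfl⟩
  have hcV_mult : ∀ y, y ∈ B → {V | V ∈ cV ∧ y ∈ V}.encard ≤ ((n + 1 : ℕ) : ℕ∞) := by
    intro y hy
    have hsub : {V | V ∈ cV ∧ y ∈ V} ⊆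
        (fun V₀ : Set B => Subtype.val '' V₀) '' {V₀ | V₀ ∈ 𝒱₀ ∧ (⟨y, hy⟩ : B) ∈ V₀} := by
      rintro V ⟨⟨V₀, hV₀, rfl⟩, hyV⟩
      obtain ⟨p, hp, hpy⟩ := hyV
      have hpe : p = ⟨y, hy⟩ := Subtype.ext hpy
      exact ⟨V₀, ⟨hV₀, hpe ▸ hp⟩, rfl⟩
    exact le_trans (le_trans (Set.encard_mono hsub) (Set.encard_image_le _ _))
      (hV₀mult ⟨y, hy⟩)
  -- Assignment of enlarged `A`-sets to `B`-sets.
  set asgn : Set X → Prop :=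
    fun U => ∃ b, b ∈ B ∧ b ∉ A ∧ b ∉ P ∧ ∃ u, u ∈ U ∧ (b, u) ∈ pw L 4 with hasgndef
  have hVex : ∀ U : Set X, ∃ V, asgn U →
      V ∈ cV ∧ ∃ b, b ∈ V ∧ (∃ u, u ∈ U ∧ (b, u) ∈ pw L 4) ∧
        ∀ y, y ∈ B → (y, b) ∈ M → y ∈ V := by
    intro U
    by_cases h : asgn U
    · obtain ⟨b, hbB, -, -, hu⟩ := h
      obtain ⟨V, hV, hVapp⟩ := hcV_app b hbB
      exact ⟨V, fun _ => ⟨hV, b, hVapp b hbB (hM0 (pw_refl L 0 b)), hu, hVapp⟩⟩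
    · exact ⟨∅, fun h' => absurd h' h⟩
  choose Vof hVof using hVex
  -- The final cover.
  set WV : Set X → Set X :=
    fun V => (V \ (A ∪ P)) ∪ {y | ∃ U, U ∈ cU ∧ asgn U ∧ Vof U = V ∧ y ∈ hat U}
    with hWVdef
  set 𝒲 : Set (Set X) :=
    {W | (∃ V, V ∈ cV ∧ W = WV V) ∨ (∃ U, U ∈ cU ∧ ¬ asgn U ∧ W = hat U)} with h𝒲def
  -- Main claim: cover + appetite.
  have hmain : ∀ x : X, ∃ W, W ∈ 𝒲 ∧ ∀ y, (y = x ∨ (y, x) ∈ L) → y ∈ W := by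
    intro x
    have hyx0 : ∀ y, (y = x ∨ (y, x) ∈ L) → (y, x) ∈ pw L 0 := by
      rintro y (rfl | h)
      · exact pw_refl L 0 _
      · exact subset_pw L h
    by_cases hnear : ∃ a, a ∈ A ∧ (a, x) ∈ pw L 2
    · obtain ⟨a, haA, hax⟩ := hnear
      obtain ⟨U, hUcU, hUapp⟩ := hcU_app a haA
      have haU : a ∈ U := hUapp a haA (pw_refl L 5 a)
      have hya : ∀ y, (y, x) ∈ pw L 0 → (y, a) ∈ pw L 3 :=
        fun y h => pw_trans 2 0 h (pw_symm 2 hax)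
      have hstar : ∀ y, (y, x) ∈ pw L 0 → y ∈ A ∪ P → y ∈ hat U := by
        intro y h hyAP
        rcases hyAP with hyA | hyP
        · exact Or.inl (hUapp y hyA (pw_mono (by omega) (hya y h)))
        · refine Or.inr ⟨hyP, hUapp (α y) (hα y hyP).1 ?_⟩
          exact pw_mono (by omega)
            (pw_trans 3 0 (pw_symm 0 (hα y hyP).2) (hya y h))
      by_cases hasgn : asgn U
      · obtain ⟨hVcV, b, hbV, ⟨u, huU, hbu⟩, hVapp⟩ := hVof U hasgn
        refine ⟨WV (Vof U), Or.inl ⟨Vof U, hVcV, rfl⟩, ?_⟩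
        intro y hy
        have h0 := hyx0 y hy
        by_cases hyAP : y ∈ A ∪ P
        · exact Or.inr ⟨U, hUcU, hasgn, rfl, hstar y h0 hyAP⟩
        · have hyB : y ∈ B := hAorB y (fun h => hyAP (Or.inl h))
          have hyb : (y, b) ∈ M :=
            hM1 (pw_mono (by omega) (hya y h0)) (hd U hUcU a haU u huU)
              (pw_symm 4 hbu)
          exact Or.inl ⟨hVapp y hyB hyb, hyAP⟩
      · refine ⟨hat U, Or.inr ⟨U, hUcU, hasgn, rfl⟩, ?_⟩
        intro y hy
        have h0 := hyx0 y hy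
        by_cases hyAP : y ∈ A ∪ P
        · exact hstar y h0 hyAP
        · exact absurd ⟨y, hAorB y (fun h => hyAP (Or.inl h)),
            fun h => hyAP (Or.inl h), fun h => hyAP (Or.inr h),
            a, haU, pw_mono (by omega) (hya y h0)⟩ hasgn
    · have hxB : x ∈ B := hAorB x (fun hxA => hnear ⟨x, hxA, pw_refl L 2 x⟩)
      obtain ⟨V, hVcV, hVapp⟩ := hcV_app x hxB
      refine ⟨WV V, Or.inl ⟨V, hVcV, rfl⟩, ?_⟩
      intro y hy
      have h0 := hyx0 y hy
      have hyA : y ∉ A := fun hyA => hnear ⟨y, hyA, pw_mono (by omega) h0⟩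
      have hyP : y ∉ P := by
        rintro ⟨-, -, a', ha'A, hya'⟩
        exact hnear ⟨a', ha'A,
          pw_mono (by omega) (pw_trans 0 0 (pw_symm 0 hya') h0)⟩
      refine Or.inl ⟨hVapp y (hAorB y hyA) (hM0 h0), ?_⟩
      rintro (h | h)
      · exact hyA h
      · exact hyP h
  -- Boundedness data for the final sets.
  set F : Set (X × X) :=
    cmp (pw L 0) (cmp d (pw L 4)) ∪ cmp (pw L 4) (cmp d (pw L 0)) ∪ {q | q.1 = q.2}
    with hFdef
  have hFent : ℰ.IsEntourage F :=
    ℰ.union_mem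
      (ℰ.union_mem (cmp_ent (pw_ent hL 0) (cmp_ent hd_ent (pw_ent hL 4)))
        (cmp_ent (pw_ent hL 4) (cmp_ent hd_ent (pw_ent hL 0))))
      ℰ.diagonal_mem
  have hWV_pt : ∀ V ∈ cV, ∀ p ∈ WV V, ∃ v ∈ V, (p, v) ∈ F ∧ (v, p) ∈ F := by
    intro V hV p hp
    rcases hp with ⟨hpV, -⟩ | ⟨U, hUcU, hasgn, hVofU, hphat⟩
    · exact ⟨p, hpV, Or.inr rfl, Or.inr rfl⟩
    · obtain ⟨-, b, hbV, ⟨u, huU, hbu⟩, -⟩ := hVof U hasgn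
      obtain ⟨u', hu'U, hpu', hu'p⟩ := hhat_pt U hUcU p hphat
      refine ⟨b, hVofU ▸ hbV, ?_, ?_⟩
      · exact Or.inl (Or.inl (cmp_intro hpu'
          (cmp_intro (hd U hUcU u' hu'U u huU) (pw_symm 4 hbu))))
      · exact Or.inl (Or.inr (cmp_intro hbu
          (cmp_intro (hd U hUcU u huU u' hu'U) hu'p)))
  refine ⟨𝒲, ?_, ?_, ?_, ?_⟩
  -- cover
  · intro x
    obtain ⟨W, hW, h⟩ := hmain x
    exact ⟨W, hW, h x (Or.inl rfl)⟩
  -- uniformly bounded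
  · refine ℰ.subset_mem
      (ℰ.union_mem (cmp_ent hFent (cmp_ent hD_ent hFent))
        (cmp_ent (pw_ent hL 0) (cmp_ent hd_ent (pw_ent hL 0)))) ?_
    rintro ⟨p, q⟩ hpq
    rw [Set.mem_iUnion₂] at hpq
    obtain ⟨W, hW, hp, hq⟩ := hpq
    rcases hW with ⟨V, hV, rfl⟩ | ⟨U, hU, -, rfl⟩
    · obtain ⟨v, hvV, hpv, -⟩ := hWV_pt V hV p hp
      obtain ⟨v', hv'V, -, hv'q⟩ := hWV_pt V hV q hq
      exact Or.inl (cmp_intro hpv (cmp_intro (hD V hV v hvV v' hv'V) hv'q))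
    · obtain ⟨u, huU, hpu, -⟩ := hhat_pt U hU p hp
      obtain ⟨u', hu'U, -, hu'q⟩ := hhat_pt U hU q hq
      exact Or.inr (cmp_intro hpu (cmp_intro (hd U hU u huU u' hu'U) hu'q))
  -- appetite
  · intro x
    obtain ⟨W, hW, h⟩ := hmain x
    exact ⟨W, hW, fun y hy => h y (Or.inr hy)⟩
  -- multiplicity
  · intro x
    by_cases hxAP : x ∈ A ∪ P
    · have hsub : {W | W ∈ 𝒲 ∧ x ∈ W} ⊆
          (fun U => if asgn U then WV (Vof U) else hat U) '' {U | U ∈ cU ∧ x ∈ hat U} := by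
        rintro W ⟨hW, hxW⟩
        rcases hW with ⟨V, hV, rfl⟩ | ⟨U, hU, hna, rfl⟩
        · rcases hxW with ⟨-, hxAP'⟩ | ⟨U, hUcU, hasgn, hVofU, hxhat⟩
          · exact absurd hxAP hxAP'
          · exact ⟨U, ⟨hUcU, hxhat⟩, by dsimp only; rw [if_pos hasgn, hVofU]⟩
        · exact ⟨U, ⟨hU, hxW⟩, by dsimp only; rw [if_neg hna]⟩
      refine le_trans (le_trans (Set.encard_mono hsub) (Set.encard_image_le _ _)) ?_
      rcases hxAP with hxA | hxP
      · refine le_trans (Set.encard_mono ?_) (hcU_mult x hxA)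
        rintro U ⟨hU, (h | h)⟩
        · exact ⟨hU, h⟩
        · exact absurd hxA h.1.2.1
      · refine le_trans (Set.encard_mono ?_) (hcU_mult (α x) (hα x hxP).1)
        rintro U ⟨hU, (h | h)⟩
        · exact absurd (hcU_subA U hU h) hxP.2.1
        · exact ⟨hU, h.2⟩
    · have hxB : x ∈ B := hAorB x (fun h => hxAP (Or.inl h))
      have hsub : {W | W ∈ 𝒲 ∧ x ∈ W} ⊆ WV '' {V | V ∈ cV ∧ x ∈ V} := by
        rintro W ⟨hW, hxW⟩
        rcases hW with ⟨V, hV, rfl⟩ | ⟨U, hU, -, rfl⟩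
        · rcases hxW with ⟨hxV, -⟩ | ⟨U, hUcU, -, -, hxhat⟩
          · exact ⟨V, ⟨hV, hxV⟩, rfl⟩
          · exact absurd (hhatA U hUcU hxhat) hxAP
        · exact absurd (hhatA U hU hxW) hxAP
      exact le_trans (le_trans (Set.encard_mono hsub) (Set.encard_image_le _ _))
        (hcV_mult x hxB)

end CoarseStruct
open CoarseStruct in
/-- Asymptotic dimension of a finite union: if `A ∪ B = X`, then `asdim X ≤ n`
iff `asdim A ≤ n` and `asdim B ≤ n`, i.e.
`asdim X = max (asdim A) (asdim B)`. -/
theorem asdim_union {X : Type*} (ℰ : CoarseStruct X) (A B : Set X)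
    (hAB : A ∪ B = Set.univ) :
    ∀ n : ℕ, AsdimLE ℰ n ↔ (AsdimLE (ℰ.restrict A) n ∧ AsdimLE (ℰ.restrict B) n) := by
  intro n
  constructor
  · intro h
    exact ⟨asdimLE_restrict A h, asdimLE_restrict B h⟩
  · rintro ⟨hA, hB⟩
    exact asdimLE_of_union hAB hA hB
end

section
/- Let I be a set and for each i ∈ I let (X_i,ℰ_i) be a coarse space. Let X be the disjoint union of the X_i and ℰ_⊔ = {A ⊆ X × X : A ⊆ ⋃_i (X_i × X_i) and A ∩ (X_i × X_i) ∈ ℰ_i for all i ∈ I}. Then for every n ∈ ℕ, asdim(X,ℰ_⊔) ≤ n if and only if asdim(X_i,ℰ_i) ≤ n for every i ∈ I; i.e. asdim(X,ℰ_⊔) = sup_{i∈I} asdim(X_i,ℰ_i). -/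
namespace CoarseStruct

variable {I : Type*} {X : I → Type*}

/-- The disjoint-union coarse structure on `⨆ i, X i`: the entourages are the sets
`A ⊆ ⋃ᵢ (Xᵢ × Xᵢ)` with `A ∩ (Xᵢ × Xᵢ)` an entourage of `Xᵢ` for all `i`. -/
def disjointUnion (ℰ : ∀ i, CoarseStruct (X i)) : CoarseStruct (Σ i, X i) where
  IsEntourage A :=
    (∀ p ∈ A, p.1.1 = p.2.1) ∧
    ∀ i, (ℰ i).IsEntourage {q : X i × X i | ((⟨i, q.1⟩ : Σ j, X j), (⟨i, q.2⟩ : Σ j, X j)) ∈ A}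
  subset_mem := by
    intro E F hF hEF
    exact ⟨fun p hp => hF.1 p (hEF hp),
      fun i => (ℰ i).subset_mem (hF.2 i) (fun q hq => hEF hq)⟩
  union_mem := by
    intro E F hE hF
    refine ⟨fun p hp => hp.elim (hE.1 p) (hF.1 p), fun i => ?_⟩
    exact (ℰ i).subset_mem ((ℰ i).union_mem (hE.2 i) (hF.2 i)) (fun q hq => hq)
  diagonal_mem := by
    refine ⟨fun p hp => congrArg Sigma.fst hp, fun i => ?_⟩
    exact (ℰ i).subset_mem (ℰ i).diagonal_mem (fun q hq => sigma_mk_injective hq)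
  inv_mem := by
    intro E hE
    exact ⟨fun p hp => (hE.1 _ hp).symm, fun i => (ℰ i).inv_mem (hE.2 i)⟩
  comp_mem := by
    intro E F hE hF
    refine ⟨fun p hp => ?_, fun i => ?_⟩
    · obtain ⟨y, h1, h2⟩ := hp
      exact (hE.1 _ h1).trans (hF.1 _ h2)
    · refine (ℰ i).subset_mem ((ℰ i).comp_mem (hE.2 i) (hF.2 i)) ?_
      rintro ⟨a, c⟩ ⟨y, h1, h2⟩
      obtain ⟨j, yv⟩ := y
      have hij : i = j := hE.1 _ h1
      subst hij
      exact ⟨yv, h1, h2⟩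

end CoarseStruct

open CoarseStruct in
/-- Asymptotic dimension of disjoint unions:
`asdim (⨆ᵢ Xᵢ) = supᵢ asdim Xᵢ`. -/
theorem asdim_disjointUnion {I : Type*} {X : I → Type*} (ℰ : ∀ i, CoarseStruct (X i)) :
    ∀ n : ℕ, AsdimLE (disjointUnion ℰ) n ↔ ∀ i, AsdimLE (ℰ i) n := by
  intro n
  constructor
  · -- forward direction
    intro h i L hL
    set L' : Set ((Σ j, X j) × (Σ j, X j)) :=
      Prod.map (Sigma.mk i) (Sigma.mk i) '' L with hL'def
    have key : ∀ a b : X i,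
        ((⟨i, a⟩, ⟨i, b⟩) : (Σ j, X j) × (Σ j, X j)) ∈ L' ↔ (a, b) ∈ L := by
      intro a b
      constructor
      · rintro ⟨⟨c, d⟩, hcd, heq⟩
        obtain ⟨h1, h2⟩ := Prod.ext_iff.mp heq
        obtain rfl := sigma_mk_injective h1
        obtain rfl := sigma_mk_injective h2
        exact hcd
      · intro hab
        exact ⟨(a, b), hab, rfl⟩
    have hL' : (disjointUnion ℰ).IsEntourage L' := by
      refine ⟨?_, ?_⟩
      · rintro p ⟨q, hq, rfl⟩; rfl
      · intro j
        by_cases hji : j = i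
        · subst hji
          refine (ℰ j).subset_mem hL ?_
          rintro ⟨a, b⟩ hab
          exact (key a b).1 hab
        · refine (ℰ j).subset_mem (ℰ j).diagonal_mem ?_
          rintro ⟨a, b⟩ ⟨⟨c, d⟩, _, heq⟩
          obtain ⟨h1, _⟩ := Prod.ext_iff.mp heq
          exact absurd ((congrArg Sigma.fst h1 : i = j).symm) hji
    obtain ⟨𝒰, hcov, hub, happ, hmult⟩ := h hL'
    refine ⟨(fun U => Sigma.mk i ⁻¹' U) '' 𝒰, ?_, ?_, ?_, ?_⟩
    · intro x
      obtain ⟨U, hU, hxU⟩ := hcov ⟨i, x⟩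
      exact ⟨Sigma.mk i ⁻¹' U, ⟨U, hU, rfl⟩, hxU⟩
    · refine (ℰ i).subset_mem (hub.2 i) ?_
      rintro ⟨a, b⟩ hab
      simp only [Set.mem_iUnion] at hab
      obtain ⟨V, ⟨U, hU, rfl⟩, hV⟩ := hab
      obtain ⟨ha, hb⟩ := hV
      simp only [Set.mem_setOf_eq, Set.mem_iUnion]
      exact ⟨U, hU, ha, hb⟩
    · intro x
      obtain ⟨U, hU, hsub⟩ := happ ⟨i, x⟩
      refine ⟨Sigma.mk i ⁻¹' U, ⟨U, hU, rfl⟩, ?_⟩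
      intro y hy
      exact hsub ((key y x).2 hy)
    · intro x
      have hsub : {V | V ∈ (fun U => Sigma.mk i ⁻¹' U) '' 𝒰 ∧ x ∈ V} ⊆
          (fun U => Sigma.mk i ⁻¹' U) '' {U | U ∈ 𝒰 ∧ (⟨i, x⟩ : Σ j, X j) ∈ U} := by
        rintro V ⟨⟨U, hU, rfl⟩, hxV⟩
        exact ⟨U, ⟨hU, hxV⟩, rfl⟩
      calc {V | V ∈ (fun U => Sigma.mk i ⁻¹' U) '' 𝒰 ∧ x ∈ V}.encard
          ≤ ((fun U => Sigma.mk i ⁻¹' U) ''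
              {U | U ∈ 𝒰 ∧ (⟨i, x⟩ : Σ j, X j) ∈ U}).encard := Set.encard_mono hsub
        _ ≤ {U | U ∈ 𝒰 ∧ (⟨i, x⟩ : Σ j, X j) ∈ U}.encard := Set.encard_image_le _ _
        _ ≤ ((n + 1 : ℕ) : ℕ∞) := hmult ⟨i, x⟩
  · -- reverse direction
    intro h L hL
    choose 𝒰 hcov hub happ hmult using fun i => h i (hL.2 i)
    set 𝒱 : Set (Set (Σ j, X j)) := ⋃ i, (Set.image (Sigma.mk i)) '' 𝒰 i with h𝒱
    refine ⟨𝒱, ?_, ?_, ?_, ?_⟩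
    · rintro ⟨i, a⟩
      obtain ⟨U, hU, haU⟩ := hcov i a
      exact ⟨Sigma.mk i '' U, Set.mem_iUnion.2 ⟨i, U, hU, rfl⟩, ⟨a, haU, rfl⟩⟩
    · refine ⟨?_, ?_⟩
      · rintro p hp
        simp only [Set.mem_iUnion] at hp
        obtain ⟨V, hV, hpV⟩ := hp
        obtain ⟨i, U, hU, rfl⟩ := Set.mem_iUnion.1 hV
        obtain ⟨⟨c, _, h1⟩, ⟨d, _, h2⟩⟩ := hpV
        rw [← h1, ← h2]
      · intro i
        refine (ℰ i).subset_mem (hub i) ?_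
        rintro ⟨a, b⟩ hab
        simp only [Set.mem_setOf_eq, Set.mem_iUnion] at hab
        obtain ⟨V, hV, ha, hb⟩ := hab
        obtain ⟨j, U, hU, rfl⟩ := Set.mem_iUnion.1 hV
        obtain ⟨c, hcU, hc⟩ := ha
        obtain rfl : j = i := congrArg Sigma.fst hc
        obtain rfl := sigma_mk_injective hc
        obtain ⟨d, hdU, hd⟩ := hb
        obtain rfl := sigma_mk_injective hd
        simp only [Set.mem_iUnion]
        exact ⟨U, hU, hcU, hdU⟩
    · rintro ⟨i, a⟩
      obtain ⟨U, hU, hsub⟩ := happ i a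
      refine ⟨Sigma.mk i '' U, Set.mem_iUnion.2 ⟨i, U, hU, rfl⟩, ?_⟩
      rintro ⟨j, b⟩ hy
      have hji : j = i := hL.1 _ hy
      subst hji
      exact ⟨b, hsub hy, rfl⟩
    · rintro ⟨i, a⟩
      have hsub : {V | V ∈ 𝒱 ∧ (⟨i, a⟩ : Σ j, X j) ∈ V} ⊆
          (Set.image (Sigma.mk i)) '' {U | U ∈ 𝒰 i ∧ a ∈ U} := by
        rintro V ⟨hV, hxV⟩
        obtain ⟨j, U, hU, rfl⟩ := Set.mem_iUnion.1 hV
        obtain ⟨c, hcU, hc⟩ := hxV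
        obtain rfl : j = i := congrArg Sigma.fst hc
        obtain rfl := sigma_mk_injective hc
        exact ⟨U, ⟨hU, hcU⟩, rfl⟩
      calc {V | V ∈ 𝒱 ∧ (⟨i, a⟩ : Σ j, X j) ∈ V}.encard
          ≤ ((Set.image (Sigma.mk i)) '' {U | U ∈ 𝒰 i ∧ a ∈ U}).encard :=
            Set.encard_mono hsub
        _ ≤ {U | U ∈ 𝒰 i ∧ a ∈ U}.encard := Set.encard_image_le _ _
        _ ≤ ((n + 1 : ℕ) : ℕ∞) := hmult i a
end

section
/- Let (X,ℰ) and (Y,ℱ) be coarse spaces and let ℰ * ℱ be the product coarse structure on X × Y. If asdim(X,ℰ) ≤ n and asdim(Y,ℱ) ≤ m, then asdim(X × Y, ℰ * ℱ) ≤ n + m. Moreover, if Y ≠ ∅ and asdim(X × Y, ℰ * ℱ) ≤ n, then asdim(X,ℰ) ≤ n. -/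
namespace CoarseStruct

variable {X Y : Type*}

/-- The product coarse structure on `X × Y`: a set is an entourage iff its images
under both coordinate projections (applied to both components) are entourages. -/
def prod (ℰ : CoarseStruct X) (ℱ : CoarseStruct Y) : CoarseStruct (X × Y) where
  IsEntourage E :=
    ℰ.IsEntourage ((fun p : (X × Y) × (X × Y) => (p.1.1, p.2.1)) '' E) ∧
    ℱ.IsEntourage ((fun p : (X × Y) × (X × Y) => (p.1.2, p.2.2)) '' E)
  subset_mem := by
    intro E F hF hEF
    exact ⟨ℰ.subset_mem hF.1 (Set.image_mono hEF), ℱ.subset_mem hF.2 (Set.image_mono hEF)⟩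
  union_mem := by
    intro E F hE hF
    constructor
    · rw [Set.image_union]; exact ℰ.union_mem hE.1 hF.1
    · rw [Set.image_union]; exact ℱ.union_mem hE.2 hF.2
  diagonal_mem := by
    constructor
    · refine ℰ.subset_mem ℰ.diagonal_mem ?_
      rintro p ⟨⟨a, b⟩, (h : a = b), rfl⟩
      exact congrArg Prod.fst h
    · refine ℱ.subset_mem ℱ.diagonal_mem ?_
      rintro p ⟨⟨a, b⟩, (h : a = b), rfl⟩
      exact congrArg Prod.snd h
  inv_mem := by
    intro E hE
    constructor
    · refine ℰ.subset_mem (ℰ.inv_mem hE.1) ?_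
      rintro p ⟨⟨a, b⟩, hab, rfl⟩
      exact ⟨(b, a), hab, rfl⟩
    · refine ℱ.subset_mem (ℱ.inv_mem hE.2) ?_
      rintro p ⟨⟨a, b⟩, hab, rfl⟩
      exact ⟨(b, a), hab, rfl⟩
  comp_mem := by
    intro E F hE hF
    constructor
    · refine ℰ.subset_mem (ℰ.comp_mem hE.1 hF.1) ?_
      rintro p ⟨⟨a, c⟩, ⟨b, h1, h2⟩, rfl⟩
      exact ⟨b.1, ⟨(a, b), h1, rfl⟩, ⟨(b, c), h2, rfl⟩⟩
    · refine ℱ.subset_mem (ℱ.comp_mem hE.2 hF.2) ?_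
      rintro p ⟨⟨a, c⟩, ⟨b, h1, h2⟩, rfl⟩
      exact ⟨b.2, ⟨(a, b), h1, rfl⟩, ⟨(b, c), h2, rfl⟩⟩

end CoarseStruct

/-!
Fix an entourage `L` of `X × Y`, let `A` and `B` be the reflexive symmetric hulls of its two
projections and put `N = n + m`. Take covers `𝒰` of `X` and `𝒱` of `Y` of multiplicity `n + 1`
and `m + 1` with appetite `A^(2N+2)` and `B^(2N+2)`. For `z = (x, y)` and a level `c`, the
members of `𝒰` engulfing the `A^c`-ball of `x` and the members of `𝒱` engulfing the `B^c`-ball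
of `y` form a pair of families that shrinks as `c` grows, with total size between `2` and `N + 2`
for `c ≤ 2N + 2`. Hence on the levels `1, …, 2N + 1` the pair takes at most `N + 1` values, and it
is constant on some `[2i, 2i + 2]`. Group the points of `X × Y` by the values their pair takes on
`1, …, 2N + 1`: each group lies in a product `U × V` with `U ∈ 𝒰`, `V ∈ 𝒱`, every point lies in
at most `N + 1` groups, and since an `A`-step moves the engulfing families by one level, the
`L`-ball of `z` lies in the group of its pair at level `2i + 1`.

Conversely, every slice `X × {y}` is a coarse embedding of `X`, and pulling back covers shows
that asymptotic dimension does not increase under coarse embeddings.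
-/

section Chains

open Set

variable {α : Type*} [PartialOrder α] {R : ℕ → α} {size : α → ℕ}

lemma Nat.exists_eq_succ_of_antitone {f : ℕ → ℕ} (hf : Antitone f) {k : ℕ}
    (hk : f 0 < f k + k) : ∃ i < k, f i = f (i + 1) := by
  by_contra! h
  have hdrop : ∀ j ≤ k, f j + j ≤ f 0 := by
    intro j hj
    induction j with
    | zero => simp
    | succ j ih =>
      have := (hf (Nat.le_add_right j 1)).lt_of_ne (h j (by omega)).symm
      have := ih (by omega)
      omega
  have := hdrop k le_rfl
  omega

lemma Antitone.eq_of_size_eq (hR : Antitone R) (hs : StrictMonoOn size (range R)) {i j : ℕ}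
    (hij : i ≤ j) (h : size (R i) = size (R j)) : R i = R j := by
  by_contra hne
  exact (hs ⟨j, rfl⟩ ⟨i, rfl⟩ ((hR hij).lt_of_ne (Ne.symm hne))).ne h.symm

lemma Antitone.size_comp (hR : Antitone R) (hs : StrictMonoOn size (range R)) :
    Antitone (size ∘ R) :=
  fun _ _ hij => hs.monotoneOn ⟨_, rfl⟩ ⟨_, rfl⟩ (hR hij)

lemma Antitone.exists_eq_succ (hR : Antitone R) (hs : StrictMonoOn size (range R)) {k : ℕ}
    (hk : size (R 0) < size (R k) + k) : ∃ i < k, R i = R (i + 1) :=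
  let ⟨i, hi, h⟩ := Nat.exists_eq_succ_of_antitone (hR.size_comp hs) hk
  ⟨i, hi, hR.eq_of_size_eq hs i.le_succ h⟩

lemma Antitone.encard_image_Icc_le (hR : Antitone R) (hs : StrictMonoOn size (range R))
    (a b : ℕ) : (R '' Icc a b).encard ≤ (size (R a) + 1 - size (R b) : ℕ) := by
  have hinj : InjOn size (R '' Icc a b) := by
    rintro _ ⟨i, -, rfl⟩ _ ⟨j, -, rfl⟩ h
    rcases le_total i j with hij | hij
    · exact hR.eq_of_size_eq hs hij h
    · exact (hR.eq_of_size_eq hs hij h.symm).symm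
  rw [← hinj.encard_image, ← Nat.card_Icc, ← encard_coe_eq_coe_finsetCard, Finset.coe_Icc]
  refine encard_le_encard ?_
  rintro _ ⟨_, ⟨i, hi, rfl⟩, rfl⟩
  exact ⟨hR.size_comp hs hi.2, hR.size_comp hs hi.1⟩

lemma strictMonoOn_ncard_add_ncard {β γ : Type*} :
    StrictMonoOn (fun p : Set β × Set γ => p.1.ncard + p.2.ncard)
      {p | p.1.Finite ∧ p.2.Finite} := by
  rintro ⟨s, t⟩ - ⟨s', t'⟩ ⟨hs', ht'⟩ h
  rcases Prod.lt_iff.1 h with ⟨h₁, h₂⟩ | ⟨h₁, h₂⟩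
  · exact add_lt_add_of_lt_of_le (ncard_lt_ncard h₁ hs') (ncard_le_ncard h₂ ht')
  · exact add_lt_add_of_le_of_lt (ncard_le_ncard h₁ hs') (ncard_lt_ncard h₂ ht')

end Chains

namespace CoarseStruct

open Set SetRel

variable {X Y Z : Type*}

section Entourages

variable {ℰ : CoarseStruct X} {ℱ : CoarseStruct Y} {A E : SetRel X X}

def relPow (A : SetRel X X) : ℕ → SetRel X X
  | 0 => .id
  | c + 1 => relPow A c ○ A

lemma isEntourage_relPow (hA : ℰ.IsEntourage A) : ∀ c, ℰ.IsEntourage (relPow A c)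
  | 0 => ℰ.diagonal_mem
  | c + 1 => ℰ.comp_mem (isEntourage_relPow hA c) hA

lemma relPow_mono [A.IsRefl] : Monotone (relPow A) :=
  monotone_nat_of_le_succ fun _ => left_subset_comp

lemma mem_relPow_self [A.IsRefl] (c : ℕ) (x : X) : (x, x) ∈ relPow A c :=
  relPow_mono (Nat.zero_le c) rfl

def reflSymmHull (E : SetRel X X) : SetRel X X := .id ∪ E ∪ E.inv

instance isRefl_reflSymmHull : (reflSymmHull E).IsRefl := ⟨fun _ => Or.inl (Or.inl rfl)⟩

instance isSymm_reflSymmHull : (reflSymmHull E).IsSymm := by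
  refine ⟨fun a b h => ?_⟩
  rcases h with (h | h) | h
  · exact Or.inl (Or.inl (show a = b from h).symm)
  · exact Or.inr h
  · exact Or.inl (Or.inr h)

lemma subset_reflSymmHull : E ⊆ reflSymmHull E := fun _ h => Or.inl (Or.inr h)

lemma isEntourage_reflSymmHull (hE : ℰ.IsEntourage E) : ℰ.IsEntourage (reflSymmHull E) :=
  ℰ.union_mem (ℰ.union_mem ℰ.diagonal_mem hE) (ℰ.inv_mem hE)

lemma isEntourage_prod_of_mapsTo {E : SetRel (X × Y) (X × Y)} {E₁ : SetRel X X} {E₂ : SetRel Y Y}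
    (h₁ : ℰ.IsEntourage E₁) (h₂ : ℱ.IsEntourage E₂)
    (hE₁ : MapsTo (fun p : (X × Y) × (X × Y) => (p.1.1, p.2.1)) E E₁)
    (hE₂ : MapsTo (fun p : (X × Y) × (X × Y) => (p.1.2, p.2.2)) E E₂) :
    (ℰ.prod ℱ).IsEntourage E :=
  ⟨ℰ.subset_mem h₁ hE₁.image_subset, ℱ.subset_mem h₂ hE₂.image_subset⟩

end Entourages

lemma HasAppetite.mono {𝒰 : Set (Set X)} {L L' : SetRel X X} (h : HasAppetite 𝒰 L)
    (hL : L' ⊆ L) : HasAppetite 𝒰 L' := fun x =>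
  let ⟨U, hU, hball⟩ := h x
  ⟨U, hU, fun _ hy => hball (hL hy)⟩

lemma MultiplicityLE.finite {𝒰 : Set (Set X)} {k : ℕ} (h : MultiplicityLE 𝒰 k) (x : X) :
    {U | U ∈ 𝒰 ∧ x ∈ U}.Finite :=
  finite_of_encard_le_coe (h x)

lemma MultiplicityLE.ncard_le {𝒰 : Set (Set X)} {k : ℕ} (h : MultiplicityLE 𝒰 k) (x : X) :
    {U | U ∈ 𝒰 ∧ x ∈ U}.ncard ≤ k :=
  (encard_le_coe_iff_finite_ncard_le.1 (h x)).2

lemma AsdimLE.of_coarseEmbedding {ℰ : CoarseStruct X} {ℱ : CoarseStruct Z} {f : X → Z}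
    (hf : CoarseEmbedding ℰ ℱ f) {n : ℕ} (h : AsdimLE ℱ n) : AsdimLE ℰ n := by
  intro L hL
  obtain ⟨𝒲, hcover, hbdd, happ, hmult⟩ := h (hf.1 hL)
  refine ⟨preimage f '' 𝒲, fun x => ?_, ℰ.subset_mem (hf.2 hbdd) ?_, fun x => ?_, fun x => ?_⟩
  · obtain ⟨W, hW, hx⟩ := hcover (f x)
    exact ⟨_, mem_image_of_mem _ hW, hx⟩
  · rw [biUnion_image]
    exact iUnion₂_subset fun W hW p hp => mem_biUnion hW hp
  · obtain ⟨W, hW, hball⟩ := happ (f x)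
    exact ⟨_, mem_image_of_mem _ hW, fun y hy => hball ⟨(y, x), hy, rfl⟩⟩
  · calc {U | U ∈ preimage f '' 𝒲 ∧ x ∈ U}.encard
        ≤ (preimage f '' {W | W ∈ 𝒲 ∧ f x ∈ W}).encard :=
          encard_le_encard (by rintro _ ⟨⟨W, hW, rfl⟩, hx⟩; exact ⟨W, ⟨hW, hx⟩, rfl⟩)
      _ ≤ _ := (encard_image_le _ _).trans (hmult (f x))

lemma coarseEmbedding_prodMkLeft (ℰ : CoarseStruct X) (ℱ : CoarseStruct Y) (y : Y) :
    CoarseEmbedding ℰ (ℰ.prod ℱ) (fun x => (x, y)) := by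
  refine ⟨fun E hE => isEntourage_prod_of_mapsTo hE ℱ.diagonal_mem ?_ ?_,
    fun F hF => ℰ.subset_mem hF.1 fun p hp => ⟨_, hp, rfl⟩⟩
  · rintro _ ⟨p, hp, rfl⟩
    exact hp
  · rintro _ ⟨p, -, rfl⟩
    rfl

section Engulfing

variable {𝒰 : Set (Set X)} {A : SetRel X X} {c k : ℕ} {x x' : X}

def engulfing (𝒰 : Set (Set X)) (A : SetRel X X) (c : ℕ) (x : X) : Set (Set X) :=
  {U | U ∈ 𝒰 ∧ ball (relPow A c) x ⊆ U}

lemma engulfing_antitone [A.IsRefl] : Antitone (engulfing 𝒰 A · x) :=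
  fun _ _ hcd _ hU => ⟨hU.1, fun _ hy => hU.2 (relPow_mono hcd hy)⟩

lemma engulfing_subset [A.IsRefl] : engulfing 𝒰 A c x ⊆ {U | U ∈ 𝒰 ∧ x ∈ U} :=
  fun _ hU => ⟨hU.1, hU.2 (mem_relPow_self c x)⟩

lemma engulfing_succ_subset (h : (x', x) ∈ A) : engulfing 𝒰 A (c + 1) x ⊆ engulfing 𝒰 A c x' :=
  fun _ hU => ⟨hU.1, fun _ hy => hU.2 ⟨x', hy, h⟩⟩

lemma engulfing_nonempty (h : HasAppetite 𝒰 (relPow A c)) : (engulfing 𝒰 A c x).Nonempty :=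
  let ⟨U, hU, hball⟩ := h x
  ⟨U, hU, hball⟩

lemma engulfing_finite [A.IsRefl] (h : MultiplicityLE 𝒰 k) : (engulfing 𝒰 A c x).Finite :=
  (h.finite x).subset engulfing_subset

lemma ncard_engulfing_le [A.IsRefl] (h : MultiplicityLE 𝒰 k) : (engulfing 𝒰 A c x).ncard ≤ k :=
  (ncard_le_ncard engulfing_subset (h.finite x)).trans (h.ncard_le x)

lemma engulfing_succ_eq_of_eq [A.IsRefl] [A.IsSymm]
    (hx : engulfing 𝒰 A c x = engulfing 𝒰 A (c + 2) x) (h : (x', x) ∈ A) :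
    engulfing 𝒰 A (c + 1) x' = engulfing 𝒰 A (c + 1) x := by
  have hlow : engulfing 𝒰 A (c + 1) x ⊆ engulfing 𝒰 A (c + 2) x := by
    rw [← hx]
    exact engulfing_antitone c.le_succ
  have hhigh : engulfing 𝒰 A c x ⊆ engulfing 𝒰 A (c + 1) x := by
    rw [hx]
    exact engulfing_antitone (c + 1).le_succ
  exact ((engulfing_succ_subset (A.symm h)).trans hhigh).antisymm
    (hlow.trans (engulfing_succ_subset h))

end Engulfing

section Staircase

variable {ℰ : CoarseStruct X} {ℱ : CoarseStruct Y} {𝒰 : Set (Set X)} {𝒱 : Set (Set Y)}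
  {A : SetRel X X} {B : SetRel Y Y} {N k l : ℕ} {z : X × Y}

def engulfingPair (𝒰 : Set (Set X)) (𝒱 : Set (Set Y)) (A : SetRel X X) (B : SetRel Y Y)
    (z : X × Y) (c : ℕ) : Set (Set X) × Set (Set Y) :=
  (engulfing 𝒰 A c z.1, engulfing 𝒱 B c z.2)

def stair (𝒰 : Set (Set X)) (𝒱 : Set (Set Y)) (A : SetRel X X) (B : SetRel Y Y) (N : ℕ)
    (p : Set (Set X) × Set (Set Y)) : Set (X × Y) :=
  {z | p ∈ engulfingPair 𝒰 𝒱 A B z '' Icc 1 (2 * N + 1)}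

def staircase (𝒰 : Set (Set X)) (𝒱 : Set (Set Y)) (A : SetRel X X) (B : SetRel Y Y) (N : ℕ) :
    Set (Set (X × Y)) :=
  stair 𝒰 𝒱 A B N '' {p | p.1.Nonempty ∧ p.2.Nonempty}

lemma engulfingPair_antitone [A.IsRefl] [B.IsRefl] : Antitone (engulfingPair 𝒰 𝒱 A B z) :=
  fun _ _ hcd => ⟨engulfing_antitone hcd, engulfing_antitone hcd⟩

lemma strictMonoOn_engulfingPair [A.IsRefl] [B.IsRefl] (h𝒰 : MultiplicityLE 𝒰 k)
    (h𝒱 : MultiplicityLE 𝒱 l) :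
    StrictMonoOn (fun p : Set (Set X) × Set (Set Y) => p.1.ncard + p.2.ncard)
      (range (engulfingPair 𝒰 𝒱 A B z)) :=
  strictMonoOn_ncard_add_ncard.mono <| range_subset_iff.2 fun _ =>
    ⟨engulfing_finite h𝒰, engulfing_finite h𝒱⟩

lemma subset_of_mem_stair [A.IsRefl] [B.IsRefl] {p : Set (Set X) × Set (Set Y)}
    (hz : z ∈ stair 𝒰 𝒱 A B N p) :
    p.1 ⊆ {U | U ∈ 𝒰 ∧ z.1 ∈ U} ∧ p.2 ⊆ {V | V ∈ 𝒱 ∧ z.2 ∈ V} := by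
  obtain ⟨c, -, rfl⟩ := hz
  exact ⟨engulfing_subset, engulfing_subset⟩

lemma isCover_staircase (h𝒰 : HasAppetite 𝒰 (relPow A 1)) (h𝒱 : HasAppetite 𝒱 (relPow B 1)) :
    IsCover (staircase 𝒰 𝒱 A B N) := fun z =>
  ⟨_, mem_image_of_mem _ ⟨engulfing_nonempty h𝒰, engulfing_nonempty h𝒱⟩, 1, ⟨le_rfl, by omega⟩, rfl⟩

lemma uniformlyBounded_staircase [A.IsRefl] [B.IsRefl] (h𝒰 : UniformlyBounded ℰ 𝒰)
    (h𝒱 : UniformlyBounded ℱ 𝒱) : UniformlyBounded (ℰ.prod ℱ) (staircase 𝒰 𝒱 A B N) := by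
  refine isEntourage_prod_of_mapsTo h𝒰 h𝒱 ?_ ?_
  all_goals
    intro q hq
    simp only [staircase, biUnion_image, mem_iUnion₂] at hq
    obtain ⟨p, ⟨⟨U, hU⟩, ⟨V, hV⟩⟩, hz, hz'⟩ := hq
    replace hz := subset_of_mem_stair hz
    replace hz' := subset_of_mem_stair hz'
  · exact mem_biUnion (hz.1 hU).1 ⟨(hz.1 hU).2, (hz'.1 hU).2⟩
  · exact mem_biUnion (hz.2 hV).1 ⟨(hz.2 hV).2, (hz'.2 hV).2⟩

lemma ncard_engulfingPair_le [A.IsRefl] [B.IsRefl] (h𝒰 : MultiplicityLE 𝒰 k)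
    (h𝒱 : MultiplicityLE 𝒱 l) (c : ℕ) :
    (engulfingPair 𝒰 𝒱 A B z c).1.ncard + (engulfingPair 𝒰 𝒱 A B z c).2.ncard ≤ k + l :=
  add_le_add (ncard_engulfing_le h𝒰) (ncard_engulfing_le h𝒱)

lemma two_le_ncard_engulfingPair [A.IsRefl] [B.IsRefl] {c : ℕ} (h𝒰 : MultiplicityLE 𝒰 k)
    (h𝒱 : MultiplicityLE 𝒱 l) (h𝒰c : HasAppetite 𝒰 (relPow A c))
    (h𝒱c : HasAppetite 𝒱 (relPow B c)) :
    2 ≤ (engulfingPair 𝒰 𝒱 A B z c).1.ncard + (engulfingPair 𝒰 𝒱 A B z c).2.ncard :=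
  add_le_add (a := 1) (c := 1) ((ncard_pos (engulfing_finite h𝒰)).2 (engulfing_nonempty h𝒰c))
    ((ncard_pos (engulfing_finite h𝒱)).2 (engulfing_nonempty h𝒱c))

lemma multiplicityLE_staircase [A.IsRefl] [B.IsRefl] {n m : ℕ} (h𝒰 : MultiplicityLE 𝒰 (n + 1))
    (h𝒱 : MultiplicityLE 𝒱 (m + 1)) (h𝒰N : HasAppetite 𝒰 (relPow A (2 * (n + m) + 1)))
    (h𝒱N : HasAppetite 𝒱 (relPow B (2 * (n + m) + 1))) :
    MultiplicityLE (staircase 𝒰 𝒱 A B (n + m)) (n + m + 1) := by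
  intro z
  have hsub : {W | W ∈ staircase 𝒰 𝒱 A B (n + m) ∧ z ∈ W} ⊆
      stair 𝒰 𝒱 A B (n + m) '' (engulfingPair 𝒰 𝒱 A B z '' Icc 1 (2 * (n + m) + 1)) := by
    rintro _ ⟨⟨p, -, rfl⟩, hz⟩
    exact mem_image_of_mem _ hz
  have hupper := ncard_engulfingPair_le (A := A) (B := B) (z := z) h𝒰 h𝒱 1
  have hlower := two_le_ncard_engulfingPair (z := z) h𝒰 h𝒱 h𝒰N h𝒱N
  calc _ ≤ _ := encard_le_encard hsub
    _ ≤ _ := encard_image_le _ _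
    _ ≤ _ := engulfingPair_antitone.encard_image_Icc_le (strictMonoOn_engulfingPair h𝒰 h𝒱) _ _
    _ ≤ _ := by norm_cast; omega

lemma hasAppetite_staircase [A.IsRefl] [A.IsSymm] [B.IsRefl] [B.IsSymm] {n m : ℕ}
    (h𝒰 : MultiplicityLE 𝒰 (n + 1)) (h𝒱 : MultiplicityLE 𝒱 (m + 1))
    (h𝒰N : HasAppetite 𝒰 (relPow A (2 * (n + m) + 2)))
    (h𝒱N : HasAppetite 𝒱 (relPow B (2 * (n + m) + 2))) {L : SetRel (X × Y) (X × Y)}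
    (hLA : MapsTo (fun p : (X × Y) × (X × Y) => (p.1.1, p.2.1)) L A)
    (hLB : MapsTo (fun p : (X × Y) × (X × Y) => (p.1.2, p.2.2)) L B) :
    HasAppetite (staircase 𝒰 𝒱 A B (n + m)) L := by
  intro z
  obtain ⟨i, hi, hstable⟩ : ∃ i < n + m + 1,
      engulfingPair 𝒰 𝒱 A B z (2 * i) = engulfingPair 𝒰 𝒱 A B z (2 * (i + 1)) := by
    have hR : Antitone fun i => engulfingPair 𝒰 𝒱 A B z (2 * i) :=
      engulfingPair_antitone.comp_monotone fun _ _ h => Nat.mul_le_mul_left 2 h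
    refine hR.exists_eq_succ
      ((strictMonoOn_engulfingPair h𝒰 h𝒱).mono (range_subset_iff.2 fun _ => mem_range_self _)) ?_
    have hupper := ncard_engulfingPair_le (A := A) (B := B) (z := z) h𝒰 h𝒱 0
    have hlower := two_le_ncard_engulfingPair (z := z) h𝒰 h𝒱 h𝒰N h𝒱N
    rw [Nat.mul_zero, Nat.mul_add_one]
    omega
  refine ⟨stair 𝒰 𝒱 A B (n + m) (engulfingPair 𝒰 𝒱 A B z (2 * i + 1)), mem_image_of_mem _
    ⟨(engulfing_nonempty h𝒰N).mono (engulfing_antitone (by omega)),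
      (engulfing_nonempty h𝒱N).mono (engulfing_antitone (by omega))⟩,
    fun z' hz' => ⟨2 * i + 1, ⟨by omega, by omega⟩, ?_⟩⟩
  exact Prod.ext (engulfing_succ_eq_of_eq (congrArg Prod.fst hstable) (hLA hz'))
    (engulfing_succ_eq_of_eq (congrArg Prod.snd hstable) (hLB hz'))

end Staircase

theorem AsdimLE.prod {ℰ : CoarseStruct X} {ℱ : CoarseStruct Y} {n m : ℕ} (hX : AsdimLE ℰ n)
    (hY : AsdimLE ℱ m) : AsdimLE (ℰ.prod ℱ) (n + m) := by
  intro L hL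
  let A := reflSymmHull ((fun p : (X × Y) × (X × Y) => (p.1.1, p.2.1)) '' L)
  let B := reflSymmHull ((fun p : (X × Y) × (X × Y) => (p.1.2, p.2.2)) '' L)
  obtain ⟨𝒰, -, h𝒰b, h𝒰a, h𝒰m⟩ :=
    hX (isEntourage_relPow (A := A) (isEntourage_reflSymmHull hL.1) (2 * (n + m) + 2))
  obtain ⟨𝒱, -, h𝒱b, h𝒱a, h𝒱m⟩ :=
    hY (isEntourage_relPow (A := B) (isEntourage_reflSymmHull hL.2) (2 * (n + m) + 2))
  exact ⟨staircase 𝒰 𝒱 A B (n + m),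
    isCover_staircase (h𝒰a.mono (relPow_mono (by omega))) (h𝒱a.mono (relPow_mono (by omega))),
    uniformlyBounded_staircase h𝒰b h𝒱b,
    hasAppetite_staircase h𝒰m h𝒱m h𝒰a h𝒱a (fun _ hp => subset_reflSymmHull (mem_image_of_mem _ hp))
      (fun _ hp => subset_reflSymmHull (mem_image_of_mem _ hp)),
    multiplicityLE_staircase h𝒰m h𝒱m (h𝒰a.mono (relPow_mono (by omega)))
      (h𝒱a.mono (relPow_mono (by omega)))⟩

end CoarseStruct

open CoarseStruct in
/-- Asymptotic dimension of products:
`asdim (X × Y) ≤ asdim X + asdim Y`, and if `Y ≠ ∅` then `asdim X ≤ asdim (X × Y)`. -/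
theorem asdim_prod {X Y : Type*} (ℰ : CoarseStruct X) (ℱ : CoarseStruct Y) (n m : ℕ) :
    (AsdimLE ℰ n → AsdimLE ℱ m → AsdimLE (ℰ.prod ℱ) (n + m)) ∧
    (Nonempty Y → AsdimLE (ℰ.prod ℱ) n → AsdimLE ℰ n) :=
  ⟨AsdimLE.prod, fun ⟨y⟩ h => h.of_coarseEmbedding (coarseEmbedding_prodMkLeft ℰ ℱ y)⟩
end

section
/- Let T be a tree, i.e. a simple graph on a vertex set V that is connected and acyclic, and let d be the graph metric on V (d(u,v) is the length of the shortest path from u to v). Then asdim(V,d) ≤ 1, and asdim(V,d) = 1 if and only if (V,d) is unbounded. -/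
/-!
Root the tree at `r` and cut it into the annuli `jH ≤ d(r, ·) < (j + 2)H`; consecutive annuli
overlap, so every vertex lies in at most two of them. Split the annulus `j` further according to
the vertex through which the geodesic from `r` passes at level `jH`. The pieces have diameter at
most `4H`, and every vertex lies in at most two of them. A ball of radius `R ≤ H / 2` around `x`
lies in one piece: its points `y` satisfy `2a + d(x, y) ≤ d(r, x) + d(r, y)` at the right level
`a`, and in a tree this forces the geodesics from `r` to `x` and to `y` to agree up to level `a`.

A bounded space has `asdim 0` (take the one-set cover). Conversely, in a cover of multiplicity one
and Lebesgue number `2`, adjacent vertices lie in the same set, so by connectedness the whole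
graph lies in one set of bounded diameter.
-/

/-- `asdim ≤ n` for a set equipped with a distance function `d`: for every `L > 0`
there are `D > 0` and a cover `𝒰` with multiplicity at most `n + 1`, Lebesgue
number at least `L` and mesh at most `D`. -/
def DistAsdimLE {V : Type*} (d : V → V → ℝ) (n : ℕ) : Prop :=
  ∀ L : ℝ, 0 < L → ∃ D : ℝ, 0 < D ∧ ∃ 𝒰 : Set (Set V),
    (∀ x : V, ∃ U ∈ 𝒰, x ∈ U) ∧
    (∀ x : V, {U | U ∈ 𝒰 ∧ x ∈ U}.encard ≤ ((n : ℕ∞) + 1)) ∧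
    (∀ x : V, ∃ U ∈ 𝒰, {y | d x y < L} ⊆ U) ∧
    (∀ U ∈ 𝒰, ∀ x ∈ U, ∀ y ∈ U, d x y ≤ D)

open Set

theorem distAsdimLE_zero_of_bounded {V : Type*} {d : V → V → ℝ}
    (h : ∃ C, ∀ u v, d u v ≤ C) : DistAsdimLE d 0 := by
  obtain ⟨C, hC⟩ := h
  intro L _
  refine ⟨max C 1, lt_max_of_lt_right one_pos, {univ}, fun x => ⟨univ, rfl, trivial⟩,
    fun x => ?_, fun x => ⟨univ, rfl, subset_univ _⟩,
    fun U _ x _ y _ => (hC x y).trans (le_max_left _ _)⟩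
  calc _ ≤ ({univ} : Set (Set V)).encard := encard_mono fun U hU => hU.1
    _ = _ := by simp

namespace SimpleGraph

variable {V : Type*} {G : SimpleGraph V}

namespace Walk

variable {u v z : V}

lemma dist_getVert_of_length_eq_dist {p : G.Walk u v} (hp : p.length = G.dist u v) {i : ℕ}
    (hi : i ≤ p.length) : G.dist u (p.getVert i) = i := by
  rw [← length_eq_dist_of_subwalk hp (p.isSubwalk_take i), take_length]
  omega

lemma getVert_dist_of_mem_support {p : G.Walk u v} (hp : p.length = G.dist u v)
    (hz : z ∈ p.support) : p.getVert (G.dist u z) = z := by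
  obtain ⟨i, rfl, hi⟩ := mem_support_iff_exists_getVert.mp hz
  rw [dist_getVert_of_length_eq_dist hp hi]

lemma dist_add_dist_of_mem_support {p : G.Walk u v} (hp : p.length = G.dist u v)
    (hz : z ∈ p.support) : G.dist u z + G.dist z v = G.dist u v := by
  obtain ⟨i, rfl, hi⟩ := mem_support_iff_exists_getVert.mp hz
  rw [dist_getVert_of_length_eq_dist hp hi,
    ← length_eq_dist_of_subwalk hp (p.isSubwalk_drop i), drop_length]
  omega

lemma dist_getVert_le (p : G.Walk u v) (i : ℕ) : G.dist (p.getVert i) v ≤ p.length - i :=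
  (dist_le (p.drop i)).trans_eq (drop_length p i)

end Walk

open Walk

lemma IsAcyclic.support_subset_support_append (hG : G.IsAcyclic) {u v w : V}
    {s : G.Walk u w} (hs : s.IsPath) (p : G.Walk u v) (q : G.Walk v w) :
    s.support ⊆ (p.append q).support := by
  classical
  obtain rfl : s = (p.append q).bypass :=
    congrArg Subtype.val ((hG.subsingleton_path _ _).elim ⟨s, hs⟩ ⟨_, bypass_isPath _⟩)
  exact support_bypass_subset_support _

lemma IsTree.mem_support_of_dist_add_dist_eq (hT : G.IsTree) {u v z : V} {p : G.Walk u v}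
    (hp : p.IsPath) (h : G.dist u z + G.dist z v = G.dist u v) : z ∈ p.support := by
  obtain ⟨q₁, hq₁⟩ := hT.connected.exists_walk_length_eq_dist u z
  obtain ⟨q₂, hq₂⟩ := hT.connected.exists_walk_length_eq_dist z v
  have hq : (q₁.append q₂).length = G.dist u v := by rw [length_append, hq₁, hq₂, h]
  obtain rfl : p = q₁.append q₂ :=
    congrArg Subtype.val ((hT.isAcyclic.subsingleton_path _ _).elim ⟨p, hp⟩
      ⟨_, isPath_of_length_eq_dist _ hq⟩)
  exact (mem_support_append_iff _ _).mpr (Or.inl q₁.end_mem_support)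

/-- The hypothesis says that `a` is at most the Gromov product `(x | y)_r`. -/
theorem IsTree.getVert_eq_getVert_of_le_gromovProduct (hT : G.IsTree) {r x y : V}
    {p : G.Walk r x} {p' : G.Walk r y} (hp : p.length = G.dist r x)
    (hp' : p'.length = G.dist r y) {a : ℕ} (ha : 2 * a + G.dist x y ≤ G.dist r x + G.dist r y) :
    p'.getVert a = p.getVert a := by
  have hc := hT.connected
  obtain ⟨q, hq⟩ := hc.exists_walk_length_eq_dist x y
  have hxy : G.dist r y ≤ G.dist r x + G.dist x y := hc.dist_triangle
  have hyx : G.dist r x ≤ G.dist r y + G.dist x y := by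
    rw [dist_comm (u := x)]; exact hc.dist_triangle
  have hay : a ≤ p'.length := by omega
  have hrw : G.dist r (p'.getVert a) = a := dist_getVert_of_length_eq_dist hp' hay
  have hwp' := p'.getVert_mem_support a
  generalize p'.getVert a = w at hrw hwp' ⊢
  have hw : w ∈ p.support := by
    have hw' := hT.isAcyclic.support_subset_support_append
      (isPath_of_length_eq_dist _ hp') p q hwp'
    rcases (mem_support_append_iff _ _).mp hw' with hw | hw
    · exact hw
    apply hT.mem_support_of_dist_add_dist_eq (isPath_of_length_eq_dist _ hp)
    have hxwy := dist_add_dist_of_mem_support hq hw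
    have hrwy := dist_add_dist_of_mem_support hp' hwp'
    have hrwx : G.dist r x ≤ G.dist r w + G.dist w x := hc.dist_triangle
    rw [dist_comm (u := w) (v := x)] at hrwx ⊢
    omega
  rw [← getVert_dist_of_mem_support hp hw, hrw]

section AnnulusCells

variable {r : V} (p : ∀ v, G.Walk r v)

def annulusCell (H j : ℕ) (u : V) : Set V :=
  {v | j * H ≤ G.dist r v ∧ G.dist r v < j * H + 2 * H ∧ (p v).getVert (j * H) = u}

def annulusCover (H : ℕ) : Set (Set V) :=
  range fun ju : ℕ × V => annulusCell p H ju.1 ju.2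

variable {p}

lemma dist_le_of_mem_annulusCell (hc : G.Connected) (hp : ∀ v, (p v).length = G.dist r v)
    {H j : ℕ} {u v w : V} (hv : v ∈ annulusCell p H j u) (hw : w ∈ annulusCell p H j u) :
    G.dist v w ≤ 4 * H := by
  set A := j * H
  obtain ⟨hv₁, hv₂, hvu⟩ := hv
  obtain ⟨hw₁, hw₂, hwu⟩ := hw
  have huv := (p v).dist_getVert_le A
  have huw := (p w).dist_getVert_le A
  rw [hp, hvu] at huv
  rw [hp, hwu] at huw
  have hvw : G.dist v w ≤ G.dist v u + G.dist u w := hc.dist_triangle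
  rw [dist_comm (u := v) (v := u)] at hvw
  omega

lemma encard_annulusCells_containing_le_two {H : ℕ} (hH : 0 < H) (x : V) :
    {U | U ∈ annulusCover p H ∧ x ∈ U}.encard ≤ 2 := by
  set j := G.dist r x / H
  have hsub : {U | U ∈ annulusCover p H ∧ x ∈ U} ⊆
      {annulusCell p H j ((p x).getVert (j * H)),
        annulusCell p H (j - 1) ((p x).getVert ((j - 1) * H))} := by
    rintro _ ⟨⟨⟨i, u⟩, rfl⟩, hx₁, hx₂, hxu⟩
    dsimp only at hx₁ hx₂ hxu
    subst hxu
    have hij : i ≤ j := (Nat.le_div_iff_mul_le hH).mpr hx₁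
    have hji : j < i + 2 := (Nat.div_lt_iff_lt_mul hH).mpr (by rw [add_mul]; exact hx₂)
    obtain rfl | rfl : i = j ∨ i = j - 1 := by omega
    · exact mem_insert _ _
    · exact mem_insert_of_mem _ rfl
  calc _ ≤ _ := encard_mono hsub
    _ ≤ 2 := (encard_insert_le _ _).trans (by norm_num)

lemma IsTree.exists_annulusCell_superset (hT : G.IsTree) (hp : ∀ v, (p v).length = G.dist r v)
    {R H : ℕ} (hH : 0 < H) (hRH : 2 * R ≤ H) (x : V) :
    ∃ j u, {y | G.dist x y < R} ⊆ annulusCell p H j u := by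
  set j := (G.dist r x + 1 - R) / H
  set A := j * H
  have hA : A ≤ G.dist r x + 1 - R := Nat.div_mul_le_self _ _
  have hA' : G.dist r x + 1 - R < A + H := Nat.lt_div_mul_add hH
  refine ⟨j, (p x).getVert A, fun y (hy : G.dist x y < R) => ?_⟩
  have hxy : G.dist r y ≤ G.dist r x + G.dist x y := hT.connected.dist_triangle
  have hyx : G.dist r x ≤ G.dist r y + G.dist x y := by
    rw [dist_comm (u := x)]; exact hT.connected.dist_triangle
  have hrxy : G.dist x y ≤ G.dist r x + G.dist r y := by
    rw [dist_comm (u := r) (v := x)]; exact hT.connected.dist_triangle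
  exact ⟨by omega, by omega, hT.getVert_eq_getVert_of_le_gromovProduct (hp x) (hp y) (by omega)⟩

end AnnulusCells

theorem IsTree.distAsdimLE_one (hT : G.IsTree) :
    DistAsdimLE (fun u v => (G.dist u v : ℝ)) 1 := by
  obtain ⟨r⟩ := hT.connected.nonempty
  choose p hp using hT.connected.exists_walk_length_eq_dist r
  intro L hL
  set R := ⌈L⌉₊
  have hR : 0 < R := Nat.ceil_pos.mpr hL
  have hball : ∀ x, ∃ U ∈ annulusCover p (2 * R),
      {y | (G.dist x y : ℝ) < L} ⊆ U := fun x => by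
    obtain ⟨j, u, hsub⟩ :=
      hT.exists_annulusCell_superset hp (R := R) (H := 2 * R) (by omega) le_rfl x
    refine ⟨_, ⟨(j, u), rfl⟩, fun y (hy : (G.dist x y : ℝ) < L) => hsub ?_⟩
    exact Nat.cast_lt.mp (hy.trans_le (Nat.le_ceil L))
  refine ⟨(4 * (2 * R) : ℕ), by positivity, _, fun x => ?_, fun x => ?_, hball, ?_⟩
  · obtain ⟨U, hU, hsub⟩ := hball x
    exact ⟨U, hU, hsub (by simpa using hL)⟩
  · exact (encard_annulusCells_containing_le_two (by omega) x).trans (by norm_num)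
  · rintro _ ⟨⟨j, u⟩, rfl⟩ v hv w hw
    show (G.dist v w : ℝ) ≤ ((4 * (2 * R) : ℕ) : ℝ)
    exact_mod_cast dist_le_of_mem_annulusCell hT.connected hp hv hw

theorem Connected.bounded_of_distAsdimLE_zero (hc : G.Connected)
    (h : DistAsdimLE (fun u v => (G.dist u v : ℝ)) 0) :
    ∃ C : ℝ, ∀ u v, (G.dist u v : ℝ) ≤ C := by
  obtain ⟨D, -, 𝒰, hcov, hmul, hleb, hdiam⟩ := h 2 two_pos
  obtain ⟨r⟩ := hc.nonempty
  obtain ⟨U, hU, hrU⟩ := hcov r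
  have hadj : ∀ x y, G.Adj x y → x ∈ U → y ∈ U := by
    intro x y hxy hx
    obtain ⟨U', hU', hball⟩ := hleb x
    have hxU' : x ∈ U' := hball (by simp)
    have hmul₁ : {U | U ∈ 𝒰 ∧ x ∈ U}.encard ≤ 1 := by simpa using hmul x
    obtain rfl : U' = U := encard_le_one_iff.mp hmul₁ _ _ ⟨hU', hxU'⟩ ⟨hU, hx⟩
    exact hball (show ((G.dist x y : ℕ) : ℝ) < 2 by rw [dist_eq_one_iff_adj.mpr hxy]; norm_num)
  have hwalk : ∀ {u v} (w : G.Walk u v), u ∈ U → v ∈ U := by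
    intro u v w
    induction w with
    | nil => exact id
    | cons h _ ih => exact fun hu => ih (hadj _ _ h hu)
  have hall : ∀ v, v ∈ U := fun v => hwalk (hc r v).some hrU
  exact ⟨D, fun u v => hdiam U hU u (hall u) v (hall v)⟩

end SimpleGraph

/-- A tree with its graph metric has asymptotic dimension at most `1`, with
equality iff it is unbounded. -/
theorem asdim_of_tree {V : Type*} (G : SimpleGraph V) (hT : G.IsTree) :
    DistAsdimLE (fun u v => (G.dist u v : ℝ)) 1 ∧
    ((DistAsdimLE (fun u v => (G.dist u v : ℝ)) 1 ∧
        ¬ DistAsdimLE (fun u v => (G.dist u v : ℝ)) 0) ↔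
      ¬ ∃ C : ℝ, ∀ u v : V, (G.dist u v : ℝ) ≤ C) :=
  ⟨hT.distAsdimLE_one,
    fun ⟨_, hnot⟩ hbdd => hnot (distAsdimLE_zero_of_bounded hbdd),
    fun hunbdd => ⟨hT.distAsdimLE_one,
      fun h => hunbdd (hT.connected.bounded_of_distAsdimLE_zero h)⟩⟩
end

section
/- Let X be a non-compact Hausdorff space with a metrisable compactification hX, let d be a metric on hX inducing its topology, and set νX = hX \ X, X_0 = ∅ and X_i = {x ∈ X : d(x, νX) ≥ 1/i} for i ≥ 1. For ρ > 0 let Δ_ρ = {(x,y) ∈ X × X : d(x,y) < ρ}. Then a set E ⊆ X × X is controlled with respect to hX if and only if there is a sequence (ρ_i)_{i∈ℕ} of non-negative real numbers converging to zero such that E \ (X_i × X_i) ⊆ Δ_{ρ_i} for all i ∈ ℕ. -/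
open Metric Filter

/-- Description of the entourages of the continuously controlled coarse structure
of a metrisable compactification: let `K = hX` be compact metric, `X ⊆ K` dense,
open and non-compact, `νX = K \ X`, `X₀ = ∅` and
`Xᵢ = {x ∈ X : d(x, νX) ≥ 1/i}` for `i ≥ 1`.  A set `E ⊆ X × X` is controlled
iff there is a sequence `ρᵢ ≥ 0` converging to `0` with
`E \ (Xᵢ × Xᵢ) ⊆ Δ_{ρᵢ}` for all `i`. -/
theorem controlled_iff_small_off_compacta
    (K : Type*) [MetricSpace K] [CompactSpace K]
    (X : Set K) (hXopen : IsOpen X) (hXdense : Dense X) (hXnc : ¬ IsCompact X)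
    (Xi : ℕ → Set K)
    (hXi0 : Xi 0 = ∅)
    (hXi : ∀ i : ℕ, 1 ≤ i → Xi i = {x ∈ X | 1 / (i : ℝ) ≤ Metric.infDist x Xᶜ})
    (E : Set (K × K)) (hE : E ⊆ X ×ˢ X) :
    closure E ⊆ (X ×ˢ X) ∪ {p : K × K | p.1 = p.2} ↔
      ∃ ρ : ℕ → ℝ, (∀ i, 0 ≤ ρ i) ∧ Tendsto ρ atTop (nhds 0) ∧
        ∀ i : ℕ, E \ (Xi i ×ˢ Xi i) ⊆ {p : K × K | dist p.1 p.2 < ρ i} := by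
  have hXc : IsClosed Xᶜ := hXopen.isClosed_compl
  have hne : Xᶜ.Nonempty := by
    by_contra h
    rw [Set.not_nonempty_iff_eq_empty, Set.compl_empty_iff] at h
    exact hXnc (h ▸ isCompact_univ)
  have hXieq : ∀ i : ℕ, 1 ≤ i →
      Xi i = {x | 1 / (i : ℝ) ≤ Metric.infDist x Xᶜ} := by
    intro i hi
    rw [hXi i hi]
    ext x
    simp only [Set.mem_setOf_eq, Set.mem_sep_iff]
    refine ⟨fun h => h.2, fun h => ⟨?_, h⟩⟩
    by_contra hx
    have h0 : Metric.infDist x Xᶜ = 0 := Metric.infDist_zero_of_mem hx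
    have hipos : (0:ℝ) < (i : ℝ) := by exact_mod_cast hi
    have : (0:ℝ) < 1 / i := by positivity
    rw [h0] at h
    linarith
  constructor
  · intro hcl
    have key : ∀ ε > (0:ℝ), ∃ N : ℕ, ∀ i ≥ N, ∀ p ∈ E \ (Xi i ×ˢ Xi i),
        dist p.1 p.2 < ε := by
      intro ε hε
      set F := closure E ∩ {p : K × K | ε ≤ dist p.1 p.2} with hF
      have hFclosed : IsClosed F :=
        isClosed_closure.inter (isClosed_le continuous_const (continuous_fst.dist continuous_snd))
      have hFX : F ⊆ X ×ˢ X := by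
        intro p hp
        rcases hcl hp.1 with h | h
        · exact h
        · exfalso
          have h2 : ε ≤ dist p.1 p.2 := hp.2
          rw [Set.mem_setOf_eq] at h
          rw [h, dist_self] at h2
          linarith
      rcases F.eq_empty_or_nonempty with hFe | hFne
      · refine ⟨0, fun i _ p hp => ?_⟩
        by_contra hd
        have : p ∈ F := ⟨subset_closure hp.1, not_lt.1 hd⟩
        rw [hFe] at this
        exact this
      · have hcont : Continuous fun p : K × K =>
            min (Metric.infDist p.1 Xᶜ) (Metric.infDist p.2 Xᶜ) :=
          ((continuous_infDist_pt Xᶜ).comp continuous_fst).min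
            ((continuous_infDist_pt Xᶜ).comp continuous_snd)
        obtain ⟨p₀, hp₀F, hp₀min⟩ :=
          hFclosed.isCompact.exists_isMinOn hFne hcont.continuousOn
        set δ := min (Metric.infDist p₀.1 Xᶜ) (Metric.infDist p₀.2 Xᶜ) with hδ
        have hδpos : 0 < δ := by
          have h1 : p₀.1 ∉ Xᶜ := fun hx => hx (hFX hp₀F).1
          have h2 : p₀.2 ∉ Xᶜ := fun hx => hx (hFX hp₀F).2
          exact lt_min ((hXc.notMem_iff_infDist_pos hne).mp h1)
            ((hXc.notMem_iff_infDist_pos hne).mp h2)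
        obtain ⟨N, hN⟩ := exists_nat_one_div_lt hδpos
        refine ⟨N + 1, fun i hi p hp => ?_⟩
        by_contra hd
        have hpF : p ∈ F := ⟨subset_closure hp.1, not_lt.1 hd⟩
        have hgp : δ ≤ min (Metric.infDist p.1 Xᶜ) (Metric.infDist p.2 Xᶜ) :=
          hp₀min hpF
        have hi1 : 1 ≤ i := le_trans (Nat.le_add_left 1 N) hi
        have hipos : (0:ℝ) < (i : ℝ) := by exact_mod_cast hi1
        have h1i : 1 / (i:ℝ) ≤ 1 / ((N:ℝ) + 1) := by
          apply one_div_le_one_div_of_le (by positivity)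
          exact_mod_cast hi
        have hlt : 1 / (i:ℝ) < δ := lt_of_le_of_lt h1i hN
        apply hp.2
        rw [hXieq i hi1]
        constructor
        · exact le_trans hlt.le (le_trans hgp (min_le_left _ _))
        · exact le_trans hlt.le (le_trans hgp (min_le_right _ _))
    -- define the sequence
    set s : ℕ → ℝ := fun i =>
      sSup ((fun p : K × K => dist p.1 p.2) '' (E \ (Xi i ×ˢ Xi i))) with hs
    have hsnonneg : ∀ i, 0 ≤ s i := fun i =>
      Real.sSup_nonneg (by rintro x ⟨p, _, rfl⟩; exact dist_nonneg)
    have hbdd : ∀ i, BddAbove ((fun p : K × K => dist p.1 p.2) '' (E \ (Xi i ×ˢ Xi i))) := by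
      intro i
      refine ⟨Metric.diam (Set.univ : Set K), ?_⟩
      rintro x ⟨p, _, rfl⟩
      exact Metric.dist_le_diam_of_mem isCompact_univ.isBounded (Set.mem_univ _) (Set.mem_univ _)
    have hsle : ∀ ε > (0:ℝ), ∃ N : ℕ, ∀ i ≥ N, s i ≤ ε := by
      intro ε hε
      obtain ⟨N, hN⟩ := key ε hε
      exact ⟨N, fun i hi => Real.sSup_le
        (by rintro x ⟨p, hp, rfl⟩; exact (hN i hi p hp).le) hε.le⟩
    have hstends : Tendsto s atTop (nhds 0) := by
      rw [Metric.tendsto_atTop]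
      intro ε hε
      obtain ⟨N, hN⟩ := hsle (ε / 2) (by linarith)
      refine ⟨N, fun i hi => ?_⟩
      rw [Real.dist_eq, sub_zero, abs_of_nonneg (hsnonneg i)]
      linarith [hN i hi]
    refine ⟨fun i => s i + 1 / (i + 1), fun i => add_nonneg (hsnonneg i) (by positivity), ?_, ?_⟩
    · have := hstends.add tendsto_one_div_add_atTop_nhds_zero_nat
      simpa using this
    · intro i p hp
      have : dist p.1 p.2 ≤ s i := le_csSup (hbdd i) ⟨p, hp, rfl⟩
      have hpos : (0:ℝ) < 1 / ((i:ℝ) + 1) := by positivity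
      simp only [Set.mem_setOf_eq]
      linarith
  · rintro ⟨ρ, hρ0, hρt, hρE⟩ p hp
    by_cases hpX : p.1 ∈ X ∧ p.2 ∈ X
    · exact Or.inl hpX
    · right
      have hkey : ∀ i : ℕ, 1 ≤ i → dist p.1 p.2 ≤ ρ i := by
        intro i hi
        have hXiClosed : IsClosed (Xi i) := by
          rw [hXieq i hi]
          exact isClosed_le continuous_const (continuous_infDist_pt _)
        have hpnot : p ∉ Xi i ×ˢ Xi i := by
          rw [Set.mem_prod, hXieq i hi]
          have hipos : (0:ℝ) < (i : ℝ) := by exact_mod_cast hi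
          rcases not_and_or.mp hpX with h | h
          · intro hmem
            have h0 : Metric.infDist p.1 Xᶜ = 0 := Metric.infDist_zero_of_mem h
            have := hmem.1
            rw [Set.mem_setOf_eq, h0] at this
            have : (0:ℝ) < 1 / i := by positivity
            linarith [hmem.1, this]
          · intro hmem
            have h0 : Metric.infDist p.2 Xᶜ = 0 := Metric.infDist_zero_of_mem h
            have h2 := hmem.2
            rw [Set.mem_setOf_eq, h0] at h2
            have : (0:ℝ) < 1 / i := by positivity
            linarith
        have hU : IsOpen (Xi i ×ˢ Xi i)ᶜ := (hXiClosed.prod hXiClosed).isOpen_compl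
        have hmem : p ∈ closure (E ∩ (Xi i ×ˢ Xi i)ᶜ) := by
          rw [_root_.mem_closure_iff] at hp ⊢
          intro o ho hpo
          obtain ⟨q, hq, hqE⟩ := hp (o ∩ (Xi i ×ˢ Xi i)ᶜ) (ho.inter hU) ⟨hpo, hpnot⟩
          exact ⟨q, hq.1, hqE, hq.2⟩
        have hsub : E ∩ (Xi i ×ˢ Xi i)ᶜ ⊆ {q : K × K | dist q.1 q.2 ≤ ρ i} := by
          intro q hq
          have h := hρE i ⟨hq.1, hq.2⟩
          simp only [Set.mem_setOf_eq] at h ⊢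
          exact h.le
        have hclosed : IsClosed {q : K × K | dist q.1 q.2 ≤ ρ i} :=
          isClosed_le (continuous_fst.dist continuous_snd) continuous_const
        exact hclosed.closure_subset_iff.mpr hsub hmem
      have hle : dist p.1 p.2 ≤ 0 := by
        refine ge_of_tendsto hρt ?_
        filter_upwards [eventually_ge_atTop 1] with i hi using hkey i hi
      have : dist p.1 p.2 = 0 := le_antisymm hle dist_nonneg
      exact dist_eq_zero.mp this
end

section
/- Let X and Y be non-compact Hausdorff spaces with metrisable compactifications hX and hY, and let ℰ_{hX} and ℰ_{hY} be the continuously controlled coarse structures. Then (X, ℰ_{hX}) and (Y, ℰ_{hY}) are coarsely equivalent if and only if the coronas νX = hX \ X and νY = hY \ Y are homeomorphic. -/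
section CoarseNotions

variable {α β : Type*}

/-- `f` is coarsely uniform w.r.t. collections of entourages `𝓔`, `𝓕`. -/
def CoarselyUniformP (𝓔 : Set (α × α) → Prop) (𝓕 : Set (β × β) → Prop) (f : α → β) : Prop :=
  ∀ E, 𝓔 E → 𝓕 (Prod.map f f '' E)

/-- A set is bounded if it is contained in `E(x)` for some entourage `E` and point `x`. -/
def IsBoundedP (𝓔 : Set (α × α) → Prop) (B : Set α) : Prop :=
  ∃ E x, 𝓔 E ∧ B ⊆ {y | (y, x) ∈ E}

/-- `f` is coarsely proper if preimages of bounded sets are bounded. -/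
def CoarselyProperP (𝓔 : Set (α × α) → Prop) (𝓕 : Set (β × β) → Prop) (f : α → β) : Prop :=
  ∀ B, IsBoundedP 𝓕 B → IsBoundedP 𝓔 (f ⁻¹' B)

/-- A coarse map is coarsely uniform and coarsely proper. -/
def CoarseMapP (𝓔 : Set (α × α) → Prop) (𝓕 : Set (β × β) → Prop) (f : α → β) : Prop :=
  CoarselyUniformP 𝓔 𝓕 f ∧ CoarselyProperP 𝓔 𝓕 f

/-- Two maps into `α` are close if `{(f s, g s) : s ∈ S}` is an entourage. -/
def CloseP {S : Type*} (𝓔 : Set (α × α) → Prop) (f g : S → α) : Prop :=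
  𝓔 (Set.range fun s => (f s, g s))

/-- The coarse spaces `α` and `β` are coarsely equivalent. -/
def CoarselyEquivalentP (𝓔 : Set (α × α) → Prop) (𝓕 : Set (β × β) → Prop) : Prop :=
  ∃ f : α → β, ∃ g : β → α, CoarseMapP 𝓔 𝓕 f ∧ CoarseMapP 𝓕 𝓔 g ∧
    CloseP 𝓔 (g ∘ f) id ∧ CloseP 𝓕 (f ∘ g) id

/-- `E(x) = {y : (y, x) ∈ E}`. -/
def ballP (E : Set (α × α)) (x : α) : Set α := {y | (y, x) ∈ E}

/-- `asdim ≤ n` w.r.t. the collection `𝓔` of entourages. -/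
def AsdimLEP (𝓔 : Set (α × α) → Prop) (n : ℕ) : Prop :=
  ∀ L, 𝓔 L → ∃ 𝒰 : Set (Set α),
    (∀ x : α, ∃ U ∈ 𝒰, x ∈ U) ∧
    𝓔 (⋃ U ∈ 𝒰, U ×ˢ U) ∧
    (∀ x : α, ∃ U ∈ 𝒰, ballP L x ⊆ U) ∧
    (∀ x : α, {U | U ∈ 𝒰 ∧ x ∈ U}.encard ≤ ((n : ℕ∞) + 1))

end CoarseNotions

/-- Given a compactification `K` of `X ⊆ K`, a set `E ⊆ X × X` is controlled if its
closure in `K × K` meets the boundary only in the diagonal. -/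
def ContrEnt (K : Type*) [TopologicalSpace K] (X : Set K) (E : Set (↥X × ↥X)) : Prop :=
  closure ((fun p : ↥X × ↥X => ((p.1 : K), (p.2 : K))) '' E) ⊆
    (X ×ˢ X) ∪ {p : K × K | p.1 = p.2}

/-!
For a metrisable compactification, a set is bounded iff its closure stays inside `X`, and pairs
from a controlled set can accumulate on the corona only along the diagonal. Hence a coarse map `f`
has a limit at every corona point `a`: properness pushes every cluster value of `f` near `a` into
the corona, and uniformity, applied to two sequences converging to `a`, makes it unique. These
limits form a continuous map `νX → νY`, and closeness of `g ∘ f` to the identity makes the limit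
maps of `f` and `g` mutually inverse.

Conversely, given a homeomorphism `h` of the coronas, send `x ∈ X` to a point of a dense sequence
of `Y` lying within `d(x, νX)` of `h` of a nearest corona point of `x`. Near the corona this map
follows `h`, and on a set at positive distance from the corona it takes finitely many values, so it
maps bounded sets to bounded sets. Such a map is coarse, and the composite of two of them for `h`
and `h⁻¹` is close to the identity.
-/

open Filter Topology Metric Set

theorem exists_seq_tendsto_of_mem_closure_image {α β : Type*} [TopologicalSpace β]
    [FrechetUrysohnSpace β] {g : α → β} {s : Set α} {b : β} (hb : b ∈ closure (g '' s)) :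
    ∃ u : ℕ → α, (∀ n, u n ∈ s) ∧ Tendsto (g ∘ u) atTop (𝓝 b) := by
  obtain ⟨v, hv, hvb⟩ := mem_closure_iff_seq_limit.1 hb
  choose u hu hgu using hv
  exact ⟨u, hu, by simpa only [Function.comp_def, hgu] using hvb⟩

section Controlled

variable {K : Type*} [TopologicalSpace K] {X : Set K}

theorem ContrEnt.mem_prod_or_eq {E : Set (X × X)} (hE : ContrEnt K X E) {ι : Type*}
    {l : Filter ι} [l.NeBot] {u : ι → X × X} (hu : ∀ᶠ i in l, u i ∈ E) {p q : K}
    (hp : Tendsto (fun i => ((u i).1 : K)) l (𝓝 p))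
    (hq : Tendsto (fun i => ((u i).2 : K)) l (𝓝 q)) :
    (p ∈ X ∧ q ∈ X) ∨ p = q :=
  hE <| mem_closure_of_tendsto (hp.prodMk_nhds hq) (hu.mono fun _ hi => mem_image_of_mem _ hi)

theorem contrEnt_range_of_tendsto [T2Space K] {u v : ℕ → X} {a : K}
    (hu : Tendsto (fun n => (u n : K)) atTop (𝓝 a))
    (hv : Tendsto (fun n => (v n : K)) atTop (𝓝 a)) :
    ContrEnt K X (range fun n => (u n, v n)) := by
  rw [ContrEnt, ← range_comp]
  refine (closure_minimal (subset_insert _ _)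
    (hu.prodMk_nhds hv).isCompact_insert_range.isClosed).trans ?_
  rintro _ (rfl | ⟨n, rfl⟩)
  exacts [Or.inr rfl, Or.inl ⟨(u n).2, (v n).2⟩]

theorem IsBoundedP.closure_subset {B : Set X} (hB : IsBoundedP (ContrEnt K X) B) :
    closure ((↑) '' B) ⊆ X := by
  obtain ⟨E, x₀, hE, hBE⟩ := hB
  intro z hz
  have hmaps : MapsTo (fun k => (k, (x₀ : K))) ((↑) '' B)
      ((fun p : X × X => ((p.1 : K), (p.2 : K))) '' E) := by
    rintro _ ⟨b, hb, rfl⟩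
    exact ⟨(b, x₀), hBE hb, rfl⟩
  rcases hE (map_mem_closure (by fun_prop) hz hmaps) with ⟨hzX, -⟩ | hzx₀
  exacts [hzX, (show z = x₀ from hzx₀) ▸ x₀.2]

theorem IsBoundedP.of_closure_subset [T1Space K] (hX : X.Nonempty) {B : Set X}
    (hB : closure ((↑) '' B) ⊆ X) : IsBoundedP (ContrEnt K X) B := by
  obtain ⟨x₀, hx₀⟩ := hX
  refine ⟨B ×ˢ {⟨x₀, hx₀⟩}, ⟨x₀, hx₀⟩, fun z hz => Or.inl ?_, fun b hb => ⟨hb, rfl⟩⟩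
  have himage : (fun p : X × X => ((p.1 : K), (p.2 : K))) '' (B ×ˢ {⟨x₀, hx₀⟩}) ⊆
      ((↑) '' B) ×ˢ {x₀} := by
    rintro _ ⟨⟨b, _⟩, ⟨hb, rfl⟩, rfl⟩
    exact ⟨mem_image_of_mem _ hb, rfl⟩
  replace hz := closure_mono himage hz
  rw [closure_prod_eq, closure_singleton] at hz
  exact ⟨hB hz.1, by rw [mem_singleton_iff.1 hz.2]; exact hx₀⟩

theorem isBoundedP_preimage_val [T1Space K] (hX : X.Nonempty) {C : Set K} (hC : IsClosed C)
    (hCX : C ⊆ X) : IsBoundedP (ContrEnt K X) ((↑) ⁻¹' C) :=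
  .of_closure_subset hX <| (closure_minimal (image_preimage_subset _ _) hC).trans hCX

end Controlled

def MapsBoundedP {α β : Type*} (𝓔 : Set (α × α) → Prop) (𝓕 : Set (β × β) → Prop)
    (f : α → β) : Prop :=
  ∀ B, IsBoundedP 𝓔 B → IsBoundedP 𝓕 (f '' B)

theorem MapsBoundedP.comp {α β γ : Type*} {𝓔 : Set (α × α) → Prop} {𝓕 : Set (β × β) → Prop}
    {𝓖 : Set (γ × γ) → Prop} {f : α → β} {g : β → γ} (hg : MapsBoundedP 𝓕 𝓖 g)
    (hf : MapsBoundedP 𝓔 𝓕 f) : MapsBoundedP 𝓔 𝓖 (g ∘ f) := fun B hB => by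
  rw [image_comp]
  exact hg _ (hf B hB)

section Corona

variable {K₁ K₂ K₃ : Type*} [TopologicalSpace K₁] [TopologicalSpace K₂] [TopologicalSpace K₃]
  {X : Set K₁} {Y : Set K₂} {Z : Set K₃}

def HasCoronaLimit (f : X → Y) (H : ↥Xᶜ → ↥Yᶜ) : Prop :=
  ∀ a : ↥Xᶜ, Tendsto (fun x => (f x : K₂)) (comap (↑) (𝓝 (a : K₁))) (𝓝 (H a : K₂))

variable {f : X → Y} {H : ↥Xᶜ → ↥Yᶜ}

namespace HasCoronaLimit

theorem tendsto (hf : HasCoronaLimit f H) {ι : Type*} {l : Filter ι} {u : ι → X} (a : ↥Xᶜ)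
    (hu : Tendsto (fun i => (u i : K₁)) l (𝓝 a)) :
    Tendsto (fun i => (f (u i) : K₂)) l (𝓝 (H a)) :=
  (hf a).comp (tendsto_comap_iff.2 hu)

theorem comp {g : Y → Z} {H' : ↥Yᶜ → ↥Zᶜ} (hg : HasCoronaLimit g H') (hf : HasCoronaLimit f H) :
    HasCoronaLimit (g ∘ f) (H' ∘ H) :=
  fun a => hg.tendsto (H a) (hf a)

theorem continuous [RegularSpace K₂] (hf : HasCoronaLimit f H) (hX : Dense X) :
    Continuous H := by
  refine continuous_iff_continuousAt.2 fun a => tendsto_subtype_rng.2 ?_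
  refine (closed_nhds_basis _).tendsto_right_iff.2 fun V ⟨hV, hVc⟩ => ?_
  obtain ⟨U, hU, hUV⟩ := mem_comap.1 (hf a hV)
  obtain ⟨W, hWU, hWo, haW⟩ := mem_nhds_iff.1 hU
  filter_upwards [continuous_subtype_val.continuousAt.preimage_mem_nhds (hWo.mem_nhds haW)]
    with b hb
  have := mem_closure_iff_comap_neBot.1 (hX b)
  exact hVc.mem_of_tendsto (hf b) (mem_comap.2 ⟨W, hWo.mem_nhds hb, fun x hx => hUV (hWU hx)⟩)

theorem leftInverse_of_closeP {g : Y → X} {H' : ↥Yᶜ → ↥Xᶜ} (hf : HasCoronaLimit f H)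
    (hg : HasCoronaLimit g H') (hX : Dense X) (hgf : CloseP (ContrEnt K₁ X) (g ∘ f) id) :
    Function.LeftInverse H' H := by
  intro a
  have := mem_closure_iff_comap_neBot.1 (hX a)
  refine Subtype.ext ((ContrEnt.mem_prod_or_eq hgf (u := fun x => (g (f x), x))
    (.of_forall fun x => mem_range_self x) (hg.comp hf a) tendsto_comap).resolve_left ?_)
  exact fun h => (H' (H a)).2 h.1

end HasCoronaLimit

theorem MapsBoundedP.mem_of_tendsto [T3Space K₁]
    (hf : MapsBoundedP (ContrEnt K₁ X) (ContrEnt K₂ Y) f) (hX : IsOpen X) {ι : Type*}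
    {l : Filter ι} [l.NeBot] {u : ι → X} {c : K₁} {z : K₂} (hc : c ∈ X)
    (hu : Tendsto (fun i => (u i : K₁)) l (𝓝 c)) (hz : Tendsto (fun i => (f (u i) : K₂)) l (𝓝 z)) :
    z ∈ Y := by
  obtain ⟨C, hCc, hC, hCX⟩ := exists_mem_nhds_isClosed_subset (hX.mem_nhds hc)
  refine (hf _ (isBoundedP_preimage_val ⟨c, hc⟩ hC hCX)).closure_subset
    (mem_closure_of_tendsto hz ?_)
  filter_upwards [hu hCc] with i hi using mem_image_of_mem _ (mem_image_of_mem f hi)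

theorem CoarselyProperP.notMem_of_mapClusterPt [T3Space K₂]
    (hf : CoarselyProperP (ContrEnt K₁ X) (ContrEnt K₂ Y) f) (hY : IsOpen Y) {a : K₁}
    (ha : a ∉ X) {q : K₂} (hq : MapClusterPt q (comap (↑) (𝓝 a)) fun x => (f x : K₂)) :
    q ∉ Y := by
  intro hqY
  obtain ⟨C, hCq, hC, hCY⟩ := exists_mem_nhds_isClosed_subset (hY.mem_nhds hqY)
  refine ha ((hf _ (isBoundedP_preimage_val ⟨q, hqY⟩ hC hCY)).closure_subset ?_)
  refine mem_closure_iff_frequently.2 ((frequently_comap.1 (hq.frequently hCq)).mono ?_)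
  rintro _ ⟨x, rfl, hx⟩
  exact mem_image_of_mem _ hx

theorem CoarselyUniformP.eq_of_mapClusterPt [T2Space K₁] [FirstCountableTopology K₁]
    [FirstCountableTopology K₂] (hf : CoarselyUniformP (ContrEnt K₁ X) (ContrEnt K₂ Y) f)
    {a : K₁} {q q' : K₂} (hq : MapClusterPt q (comap (↑) (𝓝 a)) fun x => (f x : K₂))
    (hq' : MapClusterPt q' (comap (↑) (𝓝 a)) fun x => (f x : K₂)) (hqY : q ∉ Y) : q = q' := by
  obtain ⟨u, hfu, hu⟩ := hq.exists_seq_tendsto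
  obtain ⟨v, hfv, hv⟩ := hq'.exists_seq_tendsto
  rw [tendsto_comap_iff] at hu hv
  have hE := hf _ (contrEnt_range_of_tendsto hu hv)
  refine (hE.mem_prod_or_eq (u := fun n => (f (u n), f (v n)))
    (.of_forall fun n => ⟨_, mem_range_self n, rfl⟩) hfu hfv).resolve_left fun h => hqY h.1

theorem CoarseMapP.exists_hasCoronaLimit [T2Space K₁] [FirstCountableTopology K₁]
    [T3Space K₂] [FirstCountableTopology K₂] [CompactSpace K₂]
    (hf : CoarseMapP (ContrEnt K₁ X) (ContrEnt K₂ Y) f) (hX : Dense X) (hY : IsOpen Y) :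
    ∃ H : ↥Xᶜ → ↥Yᶜ, HasCoronaLimit f H := by
  have hlim (a : ↥Xᶜ) : ∃ q : ↥Yᶜ,
      Tendsto (fun x => (f x : K₂)) (comap (↑) (𝓝 (a : K₁))) (𝓝 q) := by
    have := mem_closure_iff_comap_neBot.1 (hX a)
    obtain ⟨q, -, hq⟩ := isCompact_univ.exists_mapClusterPt (le_principal_iff.2 univ_mem)
      (f := comap (↑) (𝓝 (a : K₁))) (u := fun x => (f x : K₂))
    have hqY := hf.2.notMem_of_mapClusterPt hY a.2 hq
    exact ⟨⟨q, hqY⟩, tendsto_nhds_of_unique_mapClusterPt fun q' hq' =>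
      (hf.1.eq_of_mapClusterPt hq hq' hqY).symm⟩
  choose H hH using hlim
  exact ⟨H, hH⟩

namespace HasCoronaLimit

theorem coarselyProperP [T1Space K₁] [FrechetUrysohnSpace K₁] (hf : HasCoronaLimit f H)
    (hX : X.Nonempty) : CoarselyProperP (ContrEnt K₁ X) (ContrEnt K₂ Y) f := by
  intro B hB
  refine .of_closure_subset hX fun z hz => by_contra fun hzX => ?_
  obtain ⟨u, hu, huz⟩ := exists_seq_tendsto_of_mem_closure_image hz
  exact (H ⟨z, hzX⟩).2 <| hB.closure_subset <| mem_closure_of_tendsto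
    (hf.tendsto ⟨z, hzX⟩ huz) (.of_forall fun n => mem_image_of_mem _ (hu n))

theorem coarselyUniformP [T3Space K₁] [FirstCountableTopology K₁] [CompactSpace K₁]
    [T2Space K₂] [FirstCountableTopology K₂] (hf : HasCoronaLimit f H)
    (hfb : MapsBoundedP (ContrEnt K₁ X) (ContrEnt K₂ Y) f) (hX : IsOpen X) :
    CoarselyUniformP (ContrEnt K₁ X) (ContrEnt K₂ Y) f := by
  intro E hE z hz
  rw [image_image] at hz
  obtain ⟨p, hpE, hpz⟩ := exists_seq_tendsto_of_mem_closure_image hz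
  obtain ⟨⟨a, b⟩, φ, hφ, hab⟩ :=
    CompactSpace.tendsto_subseq fun n => (((p n).1 : K₁), ((p n).2 : K₁))
  have ha : Tendsto (fun n => ((p (φ n)).1 : K₁)) atTop (𝓝 a) := (continuous_fst.tendsto _).comp hab
  have hb : Tendsto (fun n => ((p (φ n)).2 : K₁)) atTop (𝓝 b) := (continuous_snd.tendsto _).comp hab
  have hpz' := hpz.comp hφ.tendsto_atTop
  have hz₁ : Tendsto (fun n => (f (p (φ n)).1 : K₂)) atTop (𝓝 z.1) :=
    (continuous_fst.tendsto z).comp hpz'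
  have hz₂ : Tendsto (fun n => (f (p (φ n)).2 : K₂)) atTop (𝓝 z.2) :=
    (continuous_snd.tendsto z).comp hpz'
  rcases hE.mem_prod_or_eq (.of_forall fun n => hpE (φ n)) ha hb with ⟨haX, hbX⟩ | rfl
  · exact Or.inl ⟨hfb.mem_of_tendsto hX haX ha hz₁, hfb.mem_of_tendsto hX hbX hb hz₂⟩
  by_cases haX : a ∈ X
  · exact Or.inl ⟨hfb.mem_of_tendsto hX haX ha hz₁, hfb.mem_of_tendsto hX haX hb hz₂⟩
  · exact Or.inr <| (tendsto_nhds_unique hz₁ (hf.tendsto ⟨a, haX⟩ ha)).trans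
      (tendsto_nhds_unique hz₂ (hf.tendsto ⟨a, haX⟩ hb)).symm

theorem closeP_id [T3Space K₁] [FirstCountableTopology K₁] {F : X → X} (hF : HasCoronaLimit F id)
    (hFb : MapsBoundedP (ContrEnt K₁ X) (ContrEnt K₁ X) F) (hX : IsOpen X) :
    CloseP (ContrEnt K₁ X) F id := by
  intro z hz
  rw [← image_univ, image_image] at hz
  obtain ⟨s, -, hsz⟩ := exists_seq_tendsto_of_mem_closure_image hz
  have hz₁ : Tendsto (fun n => (F (s n) : K₁)) atTop (𝓝 z.1) := (continuous_fst.tendsto z).comp hsz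
  have hz₂ : Tendsto (fun n => (s n : K₁)) atTop (𝓝 z.2) := (continuous_snd.tendsto z).comp hsz
  by_cases hz₂X : z.2 ∈ X
  · exact Or.inl ⟨hFb.mem_of_tendsto hX hz₂X hz₂ hz₁, hz₂X⟩
  · exact Or.inr (tendsto_nhds_unique hz₁ (hF.tendsto ⟨z.2, hz₂X⟩ hz₂))

end HasCoronaLimit

end Corona

theorem IsCompact.exists_forall_exists_dist_lt_of_denseRange {M : Type*} [PseudoMetricSpace M]
    {S : Set M} (hS : IsCompact S) {y : ℕ → M} (hy : DenseRange y) {δ : ℝ} (hδ : 0 < δ) :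
    ∃ N, ∀ q ∈ S, ∃ m ≤ N, dist q (y m) < δ := by
  have hcover : S ⊆ ⋃ N, ⋃ m ≤ N, ball (y m) δ := fun q _ => by
    obtain ⟨m, hm⟩ := hy.exists_dist_lt q hδ
    exact mem_iUnion.2 ⟨m, mem_iUnion₂.2 ⟨m, le_rfl, mem_ball.2 hm⟩⟩
  obtain ⟨N, hN⟩ := hS.elim_directed_cover _ (fun N => isOpen_biUnion fun m _ => isOpen_ball)
    hcover (Monotone.directed_le fun N N' hNN' => biUnion_subset_biUnion_left
      fun m (hm : m ≤ N) => le_trans hm hNN')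
  refine ⟨N, fun q hq => ?_⟩
  obtain ⟨m, hm, hqm⟩ := mem_iUnion₂.1 (hN hq)
  exact ⟨m, hm, mem_ball.1 hqm⟩

section Construction

variable {K₁ K₂ : Type*} [MetricSpace K₁] [MetricSpace K₂] {X : Set K₁} {Y : Set K₂}

theorem infDist_compl_pos (hX : IsOpen X) (hXc : (Xᶜ).Nonempty) {k : K₁} (hk : k ∈ X) :
    0 < infDist k Xᶜ :=
  (hX.isClosed_compl.notMem_iff_infDist_pos hXc).1 (not_not_intro hk)

theorem IsBoundedP.exists_pos_le_infDist [CompactSpace K₁] (hX : IsOpen X) (hXc : (Xᶜ).Nonempty)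
    {B : Set X} (hB : IsBoundedP (ContrEnt K₁ X) B) :
    ∃ δ > 0, ∀ x ∈ B, δ ≤ infDist (x : K₁) Xᶜ := by
  obtain ⟨δ, hδ, hδB⟩ := isClosed_closure.isCompact.exists_forall_le'
    (continuous_infDist_pt Xᶜ).continuousOn
    fun k hk => infDist_compl_pos hX hXc (hB.closure_subset hk)
  exact ⟨δ, hδ, fun x hx => hδB x (subset_closure (mem_image_of_mem _ hx))⟩

theorem hasCoronaLimit_of_dist_le {f : X → Y} {h : ↥Xᶜ → ↥Yᶜ} (hh : Continuous h)
    {P : X → ↥Xᶜ} (hP : ∀ x : X, dist (x : K₁) (P x : K₁) ≤ infDist (x : K₁) Xᶜ)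
    (hfP : ∀ x : X, dist (f x : K₂) (h (P x) : K₂) ≤ dist (x : K₁) (P x : K₁)) :
    HasCoronaLimit f h := by
  intro a
  have hdist : Tendsto (fun x : X => dist (x : K₁) (P x : K₁)) (comap (↑) (𝓝 (a : K₁))) (𝓝 0) := by
    refine squeeze_zero (fun _ => dist_nonneg)
      (fun x => (hP x).trans (infDist_le_dist_of_mem a.2)) ?_
    exact tendsto_iff_dist_tendsto_zero.1 tendsto_comap
  have hPa : Tendsto P (comap (↑) (𝓝 (a : K₁))) (𝓝 a) :=
    tendsto_subtype_rng.2 (tendsto_comap.congr_dist hdist)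
  exact ((continuous_subtype_val.comp hh).tendsto a |>.comp hPa).congr_dist <|
    squeeze_zero (fun _ => dist_nonneg) (fun x => by rw [dist_comm]; exact hfP x) hdist

theorem exists_hasCoronaLimit_mapsBoundedP [CompactSpace K₁] [CompactSpace K₂] (hX : IsOpen X)
    (hXc : (Xᶜ).Nonempty) (hY : IsOpen Y) (hYd : Dense Y) {h : ↥Xᶜ → ↥Yᶜ} (hh : Continuous h) :
    ∃ f : X → Y, HasCoronaLimit f h ∧ MapsBoundedP (ContrEnt K₁ X) (ContrEnt K₂ Y) f := by
  classical
  have : Nonempty Y := (hYd.nonempty_iff.2 ⟨(h ⟨_, hXc.some_mem⟩ : K₂)⟩).to_subtype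
  obtain ⟨y, hy⟩ := TopologicalSpace.exists_dense_seq Y
  have hyK : DenseRange fun m => (y m : K₂) := hYd.denseRange_val.comp hy continuous_subtype_val
  choose P hPX hP using fun x : X => hX.isClosed_compl.isCompact.exists_infDist_eq_dist hXc x
  have hex (x : X) : ∃ m, dist (h ⟨P x, hPX x⟩ : K₂) (y m) < infDist (x : K₁) Xᶜ :=
    hyK.exists_dist_lt _ (infDist_compl_pos hX hXc x.2)
  have hfP (x : X) : dist (y (Nat.find (hex x)) : K₂) (h ⟨P x, hPX x⟩) ≤ dist (x : K₁) (P x) := by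
    rw [dist_comm, ← hP x]
    exact (Nat.find_spec (hex x)).le
  -- Taking the least admissible index is what makes the image of a bounded set finite.
  refine ⟨fun x => y (Nat.find (hex x)),
    hasCoronaLimit_of_dist_le hh (P := fun x => ⟨P x, hPX x⟩) (fun x => (hP x).ge) hfP,
    fun B hB => ?_⟩
  obtain ⟨δ, hδ, hδB⟩ := hB.exists_pos_le_infDist hX hXc
  obtain ⟨N, hN⟩ := hY.isClosed_compl.isCompact.exists_forall_exists_dist_lt_of_denseRange hyK hδ
  have hfB : (fun x => y (Nat.find (hex x))) '' B ⊆ y '' Iic N := by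
    rintro _ ⟨x, hx, rfl⟩
    obtain ⟨m, hmN, hm⟩ := hN _ (h ⟨P x, hPX x⟩).2
    exact mem_image_of_mem _ ((Nat.find_min' _ (hm.trans_le (hδB x hx))).trans hmN)
  refine .of_closure_subset ⟨_, (y 0).2⟩ ?_
  have hfin : ((↑) '' (y '' Iic N) : Set K₂).Finite := ((finite_Iic N).image _).image _
  calc closure ((↑) '' ((fun x => y (Nat.find (hex x))) '' B))
      ⊆ closure ((↑) '' (y '' Iic N)) := closure_mono (image_mono hfB)
    _ = (↑) '' (y '' Iic N) := hfin.isClosed.closure_eq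
    _ ⊆ Y := Subtype.coe_image_subset _ _

end Construction

/-- Two spaces whose coarse structures are induced by metrisable compactifications
are coarsely equivalent iff their coronas are homeomorphic. -/
theorem coarselyEquivalent_iff_coronas_homeomorphic
    (K₁ K₂ : Type*) [TopologicalSpace K₁] [TopologicalSpace K₂]
    [CompactSpace K₁] [CompactSpace K₂]
    [TopologicalSpace.MetrizableSpace K₁] [TopologicalSpace.MetrizableSpace K₂]
    (X : Set K₁) (Y : Set K₂)
    (hXopen : IsOpen X) (hXdense : Dense X) (hXnc : ¬ IsCompact X)
    (hYopen : IsOpen Y) (hYdense : Dense Y) (hYnc : ¬ IsCompact Y) :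
    CoarselyEquivalentP (ContrEnt K₁ X) (ContrEnt K₂ Y) ↔
      Nonempty (↥(Xᶜ) ≃ₜ ↥(Yᶜ)) := by
  let := TopologicalSpace.metrizableSpaceMetric K₁
  let := TopologicalSpace.metrizableSpaceMetric K₂
  constructor
  · rintro ⟨f, g, hf, hg, hgf, hfg⟩
    obtain ⟨H, hH⟩ := hf.exists_hasCoronaLimit hXdense hYopen
    obtain ⟨H', hH'⟩ := hg.exists_hasCoronaLimit hYdense hXopen
    exact ⟨⟨⟨H, H', hH.leftInverse_of_closeP hH' hXdense hgf,
      hH'.leftInverse_of_closeP hH hYdense hfg⟩, hH.continuous hXdense, hH'.continuous hYdense⟩⟩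
  · rintro ⟨e⟩
    have hXc : (Xᶜ).Nonempty := nonempty_compl.2 fun h => hXnc (h ▸ isCompact_univ)
    have hYc : (Yᶜ).Nonempty := nonempty_compl.2 fun h => hYnc (h ▸ isCompact_univ)
    obtain ⟨f, hf, hfb⟩ := exists_hasCoronaLimit_mapsBoundedP hXopen hXc hYopen hYdense e.continuous
    obtain ⟨g, hg, hgb⟩ :=
      exists_hasCoronaLimit_mapsBoundedP hYopen hYc hXopen hXdense e.symm.continuous
    refine ⟨f, g, ⟨hf.coarselyUniformP hfb hXopen, hf.coarselyProperP ?_⟩,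
      ⟨hg.coarselyUniformP hgb hYopen, hg.coarselyProperP ?_⟩, ?_, ?_⟩
    · exact hXdense.nonempty_iff.2 ⟨hXc.some⟩
    · exact hYdense.nonempty_iff.2 ⟨hYc.some⟩
    · exact HasCoronaLimit.closeP_id (e.symm_comp_self ▸ hg.comp hf) (hgb.comp hfb) hXopen
    · exact HasCoronaLimit.closeP_id (e.self_comp_symm ▸ hf.comp hg) (hfb.comp hgb) hYopen
end
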